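/- arXiv:2410.07607 — 5 statements merged into one kernel-verified Lean document; each statement's English description precedes it below -/
import Mathlib

section
/- Fix n >= 1, p_i, p_m in [0,1) and c in R. On a probability space, let {B_i(j)}_{j=1}^n and {B_m(j)}_{j=1}^n be {0,1}-valued random variables such that the family of all 2n of them is mutually independent, with P(B_i(j)=1) = p_i and P(B_m(j)=1) = p_m for all j. Let {delta_i(l)}_{l=1}^n and {delta_m(l)}_{l=1}^n be square-integrable random variables such that the sigma-algebra generated by all the delta's is independent of the sigma-algebra generated by all the B's, and E[delta_i(l)*delta_m(l')] = c if l = l' and = 0 if l != l'. Define the stale returns tdelta_a(j) = Sum_{l=1}^{j} alpha_a(j, j-l) * delta_a(l) for a in {i,m}, where alpha_a(j,l) = (1 - B_a(j)) * Prod_{k=1}^{l} B_a(j-k). Then for every 1 <= j <= n: E[tdelta_i(j) * tdelta_m(j)] = c * (1 - p_i) * (1 - p_m) * (1 - (p_i*p_m)^j) / (1 - p_i*p_m). -/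
open MeasureTheory ProbabilityTheory


section Aux
variable {Ω : Type*} [MeasurableSpace Ω] {μ : Measure Ω}

lemma prod01 {ι : Type*} (s : Finset ι) (f : ι → ℝ) (h : ∀ k ∈ s, f k = 0 ∨ f k = 1) :
    (∏ k ∈ s, f k) = 0 ∨ (∏ k ∈ s, f k) = 1 := by
  classical
  induction s using Finset.induction with
  | empty => simp
  | @insert a s' hx ih =>
    rw [Finset.prod_insert hx]
    rcases h a (Finset.mem_insert_self a s') with h0 | h1
    · left; rw [h0, zero_mul]
    · rcases ih (fun k hk => h k (Finset.mem_insert_of_mem hk)) with h0 | h1'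
      · left; rw [h0, mul_zero]
      · right; rw [h1, h1', mul_one]

lemma integrable01 [IsProbabilityMeasure μ] (B : Ω → ℝ) (hmeas : Measurable B)
    (h01 : ∀ ω, B ω = 0 ∨ B ω = 1) : Integrable B μ := by
  apply Integrable.mono' (integrable_const (1:ℝ)) hmeas.aestronglyMeasurable
  filter_upwards with ω
  rcases h01 ω with h | h <;> simp [h]

lemma integral01 [IsProbabilityMeasure μ] (B : Ω → ℝ) (hmeas : Measurable B)
    (h01 : ∀ ω, B ω = 0 ∨ B ω = 1) (p : ℝ) (hp : 0 ≤ p)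
    (hP : μ {ω | B ω = 1} = ENNReal.ofReal p) : ∫ ω, B ω ∂μ = p := by
  have hs : MeasurableSet {ω | B ω = 1} := hmeas (measurableSet_singleton 1)
  have hB : B = Set.indicator {ω | B ω = 1} (fun _ => (1:ℝ)) := by
    funext ω
    rcases h01 ω with h0 | h1
    · rw [h0, Set.indicator_of_notMem]
      simp [Set.mem_setOf_eq, h0]
    · rw [Set.indicator_of_mem (show ω ∈ {ω | B ω = 1} from h1)]
      exact h1
  rw [hB, integral_indicator hs, setIntegral_const, measureReal_def, hP, smul_eq_mul, mul_one,
    ENNReal.toReal_ofReal hp]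

lemma iIndep_integral_prod {ι : Type*} [IsProbabilityMeasure μ] (g : ι → Ω → ℝ)
    (hind : iIndepFun g μ) (hmeas : ∀ i, Measurable (g i))
    (S : Finset ι) :
    ∫ ω, ∏ i ∈ S, g i ω ∂μ = ∏ i ∈ S, ∫ ω, g i ω ∂μ := by
  classical
  induction S using Finset.induction with
  | empty => simp
  | @insert a s hx ih =>
    rw [Finset.prod_insert hx]
    have hindep := (hind.indepFun_finset_prod_of_notMem hmeas hx).symm
    have hprodmeas : Measurable (∏ i ∈ s, g i) := by
      rw [show (∏ i ∈ s, g i) = fun ω => ∏ i ∈ s, g i ω from by funext ω; simp [Finset.prod_apply]]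
      exact Finset.measurable_prod s (fun i _ => hmeas i)
    have := hindep.integral_mul_eq_mul_integral (hmeas a).aestronglyMeasurable hprodmeas.aestronglyMeasurable
    calc ∫ ω, ∏ i ∈ insert a s, g i ω ∂μ
        = ∫ ω, g a ω * (∏ i ∈ s, g i) ω ∂μ := by
          congr 1; funext ω; rw [Finset.prod_insert hx]; simp [Finset.prod_apply]
      _ = (∫ ω, g a ω ∂μ) * ∫ ω, (∏ i ∈ s, g i) ω ∂μ := this
      _ = (∫ ω, g a ω ∂μ) * ∏ i ∈ s, ∫ ω, g i ω ∂μ := by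
          rw [show (fun ω => (∏ i ∈ s, g i) ω) = fun ω => ∏ i ∈ s, g i ω from
            by funext ω; simp [Finset.prod_apply], ih]

/-- The σ-algebra generated by a family of pairs of random variables indexed by `Finset.Icc 1 n`. -/
def pairSigma (f g : ℕ → Ω → ℝ) (n : ℕ) : MeasurableSpace Ω :=
  ⨆ k ∈ Finset.Icc 1 n,
    MeasurableSpace.comap (f k) inferInstance ⊔ MeasurableSpace.comap (g k) inferInstance

/-- Expectation of the product of the two staleness weights. -/
lemma alpha_cross_integral [IsProbabilityMeasure μ]
    (n j l : ℕ) (hj1 : 1 ≤ j) (hjn : j ≤ n) (hl1 : 1 ≤ l) (hlj : l ≤ j)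
    (p₁ p₂ : ℝ) (hp₁0 : 0 ≤ p₁) (hp₂0 : 0 ≤ p₂)
    (Bi Bm : ℕ → Ω → ℝ)
    (hBmeas : ∀ k, Measurable (Bi k) ∧ Measurable (Bm k))
    (hB01 : ∀ k ω, (Bi k ω = 0 ∨ Bi k ω = 1) ∧ (Bm k ω = 0 ∨ Bm k ω = 1))
    (hPi : ∀ k, 1 ≤ k → k ≤ n → μ {ω | Bi k ω = 1} = ENNReal.ofReal p₁)
    (hPm : ∀ k, 1 ≤ k → k ≤ n → μ {ω | Bm k ω = 1} = ENNReal.ofReal p₂)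
    (hind : iIndepFun
      (fun k : {k : ℕ // k ∈ Finset.Icc 1 n} × Bool =>
        fun ω => if k.2 then Bi k.1.1 ω else Bm k.1.1 ω) μ) :
    ∫ ω, ((1 - Bi j ω) * ∏ k ∈ Finset.Icc 1 (j - l), Bi (j - k) ω)
        * ((1 - Bm j ω) * ∏ k ∈ Finset.Icc 1 (j - l), Bm (j - k) ω) ∂μ
      = (1 - p₁) * (1 - p₂) * (p₁ * p₂) ^ (j - l) := by
  classical
  set ι := ({k : ℕ // k ∈ Finset.Icc 1 n} × Bool)
  set φ : ι → ℝ → ℝ := fun s y => if s.1.1 = j then 1 - y else y with hφdef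
  have hφm : ∀ s, Measurable (φ s) := by
    intro s
    by_cases h : s.1.1 = j
    · have hm : Measurable fun y : ℝ => 1 - y := measurable_const.sub measurable_id
      simpa [hφdef, h] using hm
    · have hm : Measurable fun y : ℝ => y := measurable_id
      simpa [hφdef, h] using hm
  set g : ι → Ω → ℝ := fun s => φ s ∘ (fun ω => if s.2 then Bi s.1.1 ω else Bm s.1.1 ω) with hgdef
  have hgind : iIndepFun g μ := hind.comp φ hφm
  have hgmeas : ∀ s, Measurable (g s) := by
    rintro ⟨⟨k, hk⟩, b⟩
    refine (hφm _).comp ?_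
    cases b
    · simpa using (hBmeas k).2
    · simpa using (hBmeas k).1
  set A : Finset {k : ℕ // k ∈ Finset.Icc 1 n} :=
    (Finset.Icc l j).subtype (· ∈ Finset.Icc 1 n) with hAdef
  set S : Finset ι := A ×ˢ (Finset.univ : Finset Bool) with hSdef
  have hsub : ∀ m ∈ Finset.Icc l j, m ∈ Finset.Icc 1 n := by
    intro m hm; rw [Finset.mem_Icc] at *; omega
  have hIccsplit : Finset.Icc l j = insert j (Finset.Icc l (j - 1)) := by
    ext m; simp only [Finset.mem_Icc, Finset.mem_insert]; omega
  have hjnot : j ∉ Finset.Icc l (j - 1) := by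
    simp only [Finset.mem_Icc]; omega
  -- pointwise identity
  have hpt : ∀ ω, ((1 - Bi j ω) * ∏ k ∈ Finset.Icc 1 (j - l), Bi (j - k) ω)
        * ((1 - Bm j ω) * ∏ k ∈ Finset.Icc 1 (j - l), Bm (j - k) ω)
      = ∏ s ∈ S, g s ω := by
    intro ω
    have hri : ∏ k ∈ Finset.Icc 1 (j - l), Bi (j - k) ω = ∏ m ∈ Finset.Icc l (j - 1), Bi m ω :=
      Finset.prod_nbij' (fun k => j - k) (fun m => j - m)
        (by intro a ha; rw [Finset.mem_Icc] at *; omega)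
        (by intro a ha; rw [Finset.mem_Icc] at *; omega)
        (by intro a ha; rw [Finset.mem_Icc] at ha; omega)
        (by intro a ha; rw [Finset.mem_Icc] at ha; omega)
        (fun a _ => rfl)
    have hrm : ∏ k ∈ Finset.Icc 1 (j - l), Bm (j - k) ω = ∏ m ∈ Finset.Icc l (j - 1), Bm m ω :=
      Finset.prod_nbij' (fun k => j - k) (fun m => j - m)
        (by intro a ha; rw [Finset.mem_Icc] at *; omega)
        (by intro a ha; rw [Finset.mem_Icc] at *; omega)
        (by intro a ha; rw [Finset.mem_Icc] at ha; omega)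
        (by intro a ha; rw [Finset.mem_Icc] at ha; omega)
        (fun a _ => rfl)
    have hSprod : ∏ s ∈ S, g s ω
        = ∏ k ∈ Finset.Icc l j,
            ((if k = j then 1 - Bi k ω else Bi k ω) * (if k = j then 1 - Bm k ω else Bm k ω)) := by
      rw [hSdef, Finset.prod_product]
      have h1 : ∀ x ∈ A, (∏ b : Bool, g (x, b) ω)
          = (if x.1 = j then 1 - Bi x.1 ω else Bi x.1 ω)
            * (if x.1 = j then 1 - Bm x.1 ω else Bm x.1 ω) := by
        intro x _
        rw [Fintype.prod_bool]
        simp only [hgdef, hφdef, Function.comp_apply]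
        by_cases h : x.1 = j <;> simp [h]
      rw [Finset.prod_congr rfl h1, hAdef]
      exact Finset.prod_subtype_of_mem
        (fun k => (if k = j then 1 - Bi k ω else Bi k ω) * (if k = j then 1 - Bm k ω else Bm k ω))
        hsub
    rw [hSprod, hIccsplit, Finset.prod_insert hjnot, if_pos rfl, if_pos rfl]
    have h2 : ∀ k ∈ Finset.Icc l (j - 1),
        ((if k = j then 1 - Bi k ω else Bi k ω) * (if k = j then 1 - Bm k ω else Bm k ω))
          = Bi k ω * Bm k ω := by
      intro k hk
      rw [Finset.mem_Icc] at hk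
      have : k ≠ j := by omega
      simp [this]
    rw [Finset.prod_congr rfl h2, Finset.prod_mul_distrib, hri, hrm]
    ring
  -- integral of each g s
  have hgint : ∀ s : ι, (∫ ω, g s ω ∂μ)
      = (if s.1.1 = j then (if s.2 then 1 - p₁ else 1 - p₂) else (if s.2 then p₁ else p₂)) := by
    rintro ⟨⟨k, hk⟩, b⟩
    rw [Finset.mem_Icc] at hk
    cases b
    · by_cases h : k = j
      · subst h
        simp only [hgdef, hφdef, Function.comp_apply, if_pos rfl, if_true, if_false]
        have : (∫ ω, (1 - Bm k ω) ∂μ) = 1 - p₂ := by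
          rw [integral_sub (integrable_const 1)
            (integrable01 (Bm k) (hBmeas k).2 (fun ω => (hB01 k ω).2)),
            integral_const, integral01 (Bm k) (hBmeas k).2 (fun ω => (hB01 k ω).2) p₂ hp₂0
              (hPm k hk.1 hk.2)]
          simp
        simpa using this
      · simp only [hgdef, hφdef, Function.comp_apply, if_neg h, if_true, if_false]
        simpa using integral01 (Bm k) (hBmeas k).2 (fun ω => (hB01 k ω).2) p₂ hp₂0
          (hPm k hk.1 hk.2)
    · by_cases h : k = j
      · subst h
        simp only [hgdef, hφdef, Function.comp_apply, if_pos rfl, if_true, if_false]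
        have : (∫ ω, (1 - Bi k ω) ∂μ) = 1 - p₁ := by
          rw [integral_sub (integrable_const 1)
            (integrable01 (Bi k) (hBmeas k).1 (fun ω => (hB01 k ω).1)),
            integral_const, integral01 (Bi k) (hBmeas k).1 (fun ω => (hB01 k ω).1) p₁ hp₁0
              (hPi k hk.1 hk.2)]
          simp
        simpa using this
      · simp only [hgdef, hφdef, Function.comp_apply, if_neg h, if_true, if_false]
        simpa using integral01 (Bi k) (hBmeas k).1 (fun ω => (hB01 k ω).1) p₁ hp₁0
          (hPi k hk.1 hk.2)
  -- assemble
  have hint : ∫ ω, ∏ s ∈ S, g s ω ∂μ = ∏ s ∈ S, ∫ ω, g s ω ∂μ :=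
    iIndep_integral_prod g hgind hgmeas S
  have hprodval : ∏ s ∈ S, ∫ ω, g s ω ∂μ = (1 - p₁) * (1 - p₂) * (p₁ * p₂) ^ (j - l) := by
    rw [hSdef, Finset.prod_product]
    have h1 : ∀ x ∈ A, (∏ b : Bool, ∫ ω, g (x, b) ω ∂μ)
        = (if x.1 = j then (1 - p₁) * (1 - p₂) else p₁ * p₂) := by
      intro x _
      rw [Fintype.prod_bool, hgint, hgint]
      by_cases h : x.1 = j <;> simp [h]
    rw [Finset.prod_congr rfl h1, hAdef,
      Finset.prod_subtype_of_mem (fun k => if k = j then (1 - p₁) * (1 - p₂) else p₁ * p₂) hsub,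
      hIccsplit, Finset.prod_insert hjnot, if_pos rfl]
    have h2 : ∀ k ∈ Finset.Icc l (j - 1),
        (if k = j then (1 - p₁) * (1 - p₂) else p₁ * p₂) = p₁ * p₂ := by
      intro k hk
      rw [Finset.mem_Icc] at hk
      have : k ≠ j := by omega
      simp [this]
    have hcard : j - 1 + 1 - l = j - l := by omega
    rw [Finset.prod_congr rfl h2, Finset.prod_const, Nat.card_Icc, hcard]
  calc ∫ ω, ((1 - Bi j ω) * ∏ k ∈ Finset.Icc 1 (j - l), Bi (j - k) ω)
        * ((1 - Bm j ω) * ∏ k ∈ Finset.Icc 1 (j - l), Bm (j - k) ω) ∂μ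
      = ∫ ω, ∏ s ∈ S, g s ω ∂μ := by
        congr 1; funext ω; exact hpt ω
    _ = (1 - p₁) * (1 - p₂) * (p₁ * p₂) ^ (j - l) := by rw [hint, hprodval]

end Aux

/-- Exact finite-sample cross-moment of two assets' stale returns: with mutually independent
Bernoulli staleness indicators (probabilities `p₁, p₂`), efficient returns independent of the
indicators with `E[δᵢ(l) δₘ(l')] = c 1{l = l'}`, the stale returns
`tδₐ(j) = ∑_{l=1}^j αₐ(j, j-l) δₐ(l)` satisfy
`E[tδᵢ(j) tδₘ(j)] = c (1-p₁)(1-p₂)(1-(p₁p₂)^j)/(1-p₁p₂)`. -/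
theorem stale_return_cross_moment
    {Ω : Type*} [MeasurableSpace Ω] (μ : Measure Ω) [IsProbabilityMeasure μ]
    (n : ℕ) (hn : 1 ≤ n) (p₁ p₂ : ℝ)
    (hp₁ : p₁ ∈ Set.Ico (0:ℝ) 1) (hp₂ : p₂ ∈ Set.Ico (0:ℝ) 1) (c : ℝ)
    (Bi Bm δi δm : ℕ → Ω → ℝ)
    (hBmeas : ∀ k, Measurable (Bi k) ∧ Measurable (Bm k))
    (hB01 : ∀ k ω, (Bi k ω = 0 ∨ Bi k ω = 1) ∧ (Bm k ω = 0 ∨ Bm k ω = 1))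
    (hPi : ∀ k, 1 ≤ k → k ≤ n → μ {ω | Bi k ω = 1} = ENNReal.ofReal p₁)
    (hPm : ∀ k, 1 ≤ k → k ≤ n → μ {ω | Bm k ω = 1} = ENNReal.ofReal p₂)
    (hind : iIndepFun
      (fun k : {k : ℕ // k ∈ Finset.Icc 1 n} × Bool =>
        fun ω => if k.2 then Bi k.1.1 ω else Bm k.1.1 ω) μ)
    (hδmeas : ∀ l, Measurable (δi l) ∧ Measurable (δm l))
    (hδ2 : ∀ l, 1 ≤ l → l ≤ n → MemLp (δi l) 2 μ ∧ MemLp (δm l) 2 μ)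
    (hδB : Indep
      (⨆ l ∈ Finset.Icc 1 n,
        MeasurableSpace.comap (δi l) inferInstance ⊔ MeasurableSpace.comap (δm l) inferInstance)
      (⨆ k ∈ Finset.Icc 1 n,
        MeasurableSpace.comap (Bi k) inferInstance ⊔ MeasurableSpace.comap (Bm k) inferInstance)
      μ)
    (hmom : ∀ l l', 1 ≤ l → l ≤ n → 1 ≤ l' → l' ≤ n →
      ∫ ω, δi l ω * δm l' ω ∂μ = if l = l' then c else 0) :
    ∀ j, 1 ≤ j → j ≤ n →
      ∫ ω,
        (∑ l ∈ Finset.Icc 1 j,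
          ((1 - Bi j ω) * ∏ k ∈ Finset.Icc 1 (j - l), Bi (j - k) ω) * δi l ω)
        * (∑ l ∈ Finset.Icc 1 j,
          ((1 - Bm j ω) * ∏ k ∈ Finset.Icc 1 (j - l), Bm (j - k) ω) * δm l ω) ∂μ
      = c * (1 - p₁) * (1 - p₂) * (1 - (p₁ * p₂) ^ j) / (1 - p₁ * p₂) := by

  obtain ⟨hp₁0, hp₁1⟩ := hp₁
  obtain ⟨hp₂0, hp₂1⟩ := hp₂
  intro j hj1 hjn
  classical
  set ai : ℕ → Ω → ℝ :=
    fun l ω => (1 - Bi j ω) * ∏ k ∈ Finset.Icc 1 (j - l), Bi (j - k) ω with haidef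
  set am : ℕ → Ω → ℝ :=
    fun l ω => (1 - Bm j ω) * ∏ k ∈ Finset.Icc 1 (j - l), Bm (j - k) ω with hamdef
  have hδB' : Indep (pairSigma δi δm n) (pairSigma Bi Bm n) μ := hδB
  -- sub-σ-algebra measurability
  have hBiM : ∀ k, 1 ≤ k → k ≤ n → Measurable[pairSigma Bi Bm n] (Bi k) := by
    intro k h1 h2
    have hk : k ∈ Finset.Icc 1 n := Finset.mem_Icc.mpr ⟨h1, h2⟩
    exact measurable_iff_comap_le.mpr (le_trans le_sup_left
      (le_biSup (fun k => MeasurableSpace.comap (Bi k) inferInstance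
        ⊔ MeasurableSpace.comap (Bm k) inferInstance) hk))
  have hBmM : ∀ k, 1 ≤ k → k ≤ n → Measurable[pairSigma Bi Bm n] (Bm k) := by
    intro k h1 h2
    have hk : k ∈ Finset.Icc 1 n := Finset.mem_Icc.mpr ⟨h1, h2⟩
    exact measurable_iff_comap_le.mpr (le_trans le_sup_right
      (le_biSup (fun k => MeasurableSpace.comap (Bi k) inferInstance
        ⊔ MeasurableSpace.comap (Bm k) inferInstance) hk))
  have hδiM : ∀ l, 1 ≤ l → l ≤ n → Measurable[pairSigma δi δm n] (δi l) := by
    intro l h1 h2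
    have hl : l ∈ Finset.Icc 1 n := Finset.mem_Icc.mpr ⟨h1, h2⟩
    exact measurable_iff_comap_le.mpr (le_trans le_sup_left
      (le_biSup (fun l => MeasurableSpace.comap (δi l) inferInstance
        ⊔ MeasurableSpace.comap (δm l) inferInstance) hl))
  have hδmM : ∀ l, 1 ≤ l → l ≤ n → Measurable[pairSigma δi δm n] (δm l) := by
    intro l h1 h2
    have hl : l ∈ Finset.Icc 1 n := Finset.mem_Icc.mpr ⟨h1, h2⟩
    exact measurable_iff_comap_le.mpr (le_trans le_sup_right
      (le_biSup (fun l => MeasurableSpace.comap (δi l) inferInstance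
        ⊔ MeasurableSpace.comap (δm l) inferInstance) hl))
  -- ambient measurability
  have haimeas : ∀ l, Measurable (ai l) := fun l =>
    (measurable_const.sub (hBmeas j).1).mul
      (Finset.measurable_prod _ fun k _ => (hBmeas (j - k)).1)
  have hammeas : ∀ l, Measurable (am l) := fun l =>
    (measurable_const.sub (hBmeas j).2).mul
      (Finset.measurable_prod _ fun k _ => (hBmeas (j - k)).2)
  -- 0/1 values
  have hai01 : ∀ l ω, ai l ω = 0 ∨ ai l ω = 1 := by
    intro l ω
    have h1 : (1 - Bi j ω) = 0 ∨ (1 - Bi j ω) = 1 := by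
      rcases (hB01 j ω).1 with h | h <;> simp [h]
    have h2 := prod01 (Finset.Icc 1 (j - l)) (fun k => Bi (j - k) ω)
      (fun k _ => (hB01 (j - k) ω).1)
    rcases h1 with h | h <;> rcases h2 with h' | h' <;> simp [haidef, h, h']
  have ham01 : ∀ l ω, am l ω = 0 ∨ am l ω = 1 := by
    intro l ω
    have h1 : (1 - Bm j ω) = 0 ∨ (1 - Bm j ω) = 1 := by
      rcases (hB01 j ω).2 with h | h <;> simp [h]
    have h2 := prod01 (Finset.Icc 1 (j - l)) (fun k => Bm (j - k) ω)
      (fun k _ => (hB01 (j - k) ω).2)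
    rcases h1 with h | h <;> rcases h2 with h' | h' <;> simp [hamdef, h, h']
  -- integrability of δ-products
  have hδint : ∀ l l', l ∈ Finset.Icc 1 j → l' ∈ Finset.Icc 1 j →
      Integrable (fun ω => δi l ω * δm l' ω) μ := by
    intro l l' hl hl'
    rw [Finset.mem_Icc] at hl hl'
    have h1 := (hδ2 l hl.1 (le_trans hl.2 hjn)).1
    have h2 := (hδ2 l' hl'.1 (le_trans hl'.2 hjn)).2
    have hmem : MemLp (δi l • δm l') 1 μ :=
      h2.smul h1 (hpqr := ⟨by rw [inv_one]; exact ENNReal.inv_two_add_inv_two⟩)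
    have heq : (δi l • δm l') = fun ω => δi l ω * δm l' ω := by
      funext ω; simp [smul_eq_mul]
    rw [← heq]
    exact memLp_one_iff_integrable.mp hmem
  -- integrability of each term
  have hterm_int : ∀ l ∈ Finset.Icc 1 j, ∀ l' ∈ Finset.Icc 1 j,
      Integrable (fun ω => (ai l ω * am l' ω) * (δi l ω * δm l' ω)) μ := by
    intro l hl l' hl'
    refine Integrable.bdd_mul (hδint l l' hl hl')
      ((haimeas l).mul (hammeas l')).aestronglyMeasurable (c := 1) (ae_of_all _ fun ω => ?_)
    rcases hai01 l ω with h | h <;> rcases ham01 l' ω with h' | h' <;> simp [h, h']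
  -- independence split
  have hsplitint : ∀ l ∈ Finset.Icc 1 j, ∀ l' ∈ Finset.Icc 1 j,
      ∫ ω, (ai l ω * am l' ω) * (δi l ω * δm l' ω) ∂μ
        = (∫ ω, ai l ω * am l' ω ∂μ) * (if l = l' then c else 0) := by
    intro l hl l' hl'
    rw [Finset.mem_Icc] at hl hl'
    have hAmeas : Measurable[pairSigma Bi Bm n] (fun ω => ai l ω * am l' ω) := by
      refine Measurable.mul ?_ ?_
      · exact (measurable_const.sub (hBiM j hj1 hjn)).mul
          (Finset.measurable_prod _ fun k hk => by
            rw [Finset.mem_Icc] at hk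
            exact hBiM (j - k) (by omega) (by omega))
      · exact (measurable_const.sub (hBmM j hj1 hjn)).mul
          (Finset.measurable_prod _ fun k hk => by
            rw [Finset.mem_Icc] at hk
            exact hBmM (j - k) (by omega) (by omega))
    have hXmeas : Measurable[pairSigma δi δm n] (fun ω => δi l ω * δm l' ω) :=
      (hδiM l hl.1 (le_trans hl.2 hjn)).mul (hδmM l' hl'.1 (le_trans hl'.2 hjn))
    have hIF : IndepFun (fun ω => ai l ω * am l' ω) (fun ω => δi l ω * δm l' ω) μ :=
      indep_of_indep_of_le_right
        (indep_of_indep_of_le_left hδB'.symm (measurable_iff_comap_le.mp hAmeas))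
        (measurable_iff_comap_le.mp hXmeas)
    rw [show ∫ ω, (ai l ω * am l' ω) * (δi l ω * δm l' ω) ∂μ
        = (∫ ω, ai l ω * am l' ω ∂μ) * ∫ ω, δi l ω * δm l' ω ∂μ from
      hIF.integral_mul_eq_mul_integral ((haimeas l).mul (hammeas l')).aestronglyMeasurable
      ((hδmeas l).1.mul (hδmeas l').2).aestronglyMeasurable,
      hmom l l' hl.1 (le_trans hl.2 hjn) hl'.1 (le_trans hl'.2 hjn)]
  -- key value
  have hkey : ∀ l ∈ Finset.Icc 1 j,
      ∫ ω, ai l ω * am l ω ∂μ = (1 - p₁) * (1 - p₂) * (p₁ * p₂) ^ (j - l) := by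
    intro l hl
    rw [Finset.mem_Icc] at hl
    exact alpha_cross_integral n j l hj1 hjn hl.1 hl.2 p₁ p₂ hp₁0 hp₂0 Bi Bm
      hBmeas hB01 hPi hPm hind
  -- arithmetic facts
  have hxne : p₁ * p₂ ≠ 1 := by nlinarith
  have hsum : ∑ l ∈ Finset.Icc 1 j, (p₁ * p₂) ^ (j - l)
      = ∑ m ∈ Finset.range j, (p₁ * p₂) ^ m :=
    Finset.sum_nbij' (fun l => j - l) (fun m => j - m)
      (by intro a ha; rw [Finset.mem_Icc] at ha; rw [Finset.mem_range]; omega)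
      (by intro a ha; rw [Finset.mem_range] at ha; rw [Finset.mem_Icc]; omega)
      (by intro a ha; rw [Finset.mem_Icc] at ha; omega)
      (by intro a ha; rw [Finset.mem_range] at ha; omega)
      (fun a _ => rfl)
  calc ∫ ω, (∑ l ∈ Finset.Icc 1 j, ai l ω * δi l ω)
        * (∑ l ∈ Finset.Icc 1 j, am l ω * δm l ω) ∂μ
      = ∫ ω, ∑ l ∈ Finset.Icc 1 j, ∑ l' ∈ Finset.Icc 1 j,
          (ai l ω * am l' ω) * (δi l ω * δm l' ω) ∂μ := by
        congr 1
        funext ω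
        rw [Finset.sum_mul_sum]
        exact Finset.sum_congr rfl fun l _ => Finset.sum_congr rfl fun l' _ => by ring
    _ = ∑ l ∈ Finset.Icc 1 j, ∑ l' ∈ Finset.Icc 1 j,
          ∫ ω, (ai l ω * am l' ω) * (δi l ω * δm l' ω) ∂μ := by
        rw [integral_finset_sum _ (fun l hl =>
          integrable_finset_sum _ fun l' hl' => hterm_int l hl l' hl')]
        exact Finset.sum_congr rfl fun l hl =>
          integral_finset_sum _ fun l' hl' => hterm_int l hl l' hl'
    _ = ∑ l ∈ Finset.Icc 1 j, (∫ ω, ai l ω * am l ω ∂μ) * c := by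
        refine Finset.sum_congr rfl fun l hl => ?_
        rw [Finset.sum_congr rfl (fun l' hl' => hsplitint l hl l' hl'),
          Finset.sum_eq_single_of_mem l hl]
        · rw [if_pos rfl]
        · intro b hb hbl
          rw [if_neg (fun h => hbl h.symm), mul_zero]
    _ = ∑ l ∈ Finset.Icc 1 j, ((1 - p₁) * (1 - p₂) * (p₁ * p₂) ^ (j - l)) * c := by
        exact Finset.sum_congr rfl fun l hl => by rw [hkey l hl]
    _ = c * (1 - p₁) * (1 - p₂) * (1 - (p₁ * p₂) ^ j) / (1 - p₁ * p₂) := by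
        rw [← Finset.sum_mul, ← Finset.mul_sum, hsum, geom_sum_eq hxne]
        have hconv : ((p₁ * p₂) ^ j - 1) / (p₁ * p₂ - 1)
            = (1 - (p₁ * p₂) ^ j) / (1 - p₁ * p₂) := by
          rw [div_eq_div_iff (sub_ne_zero.mpr hxne)
            (sub_ne_zero.mpr (fun h => hxne h.symm))]
          ring
        rw [hconv]
        ring
end

section
/- Fix n >= 1, p in [0,1) and c in R. On a probability space, let B(1), ..., B(n) be mutually independent {0,1}-valued random variables with P(B(j)=1) = p, and let delta(1), ..., delta(n) be square-integrable random variables such that the sigma-algebra generated by all the delta's is independent of the sigma-algebra generated by all the B's, and E[delta(l)*delta(l')] = c if l = l' and = 0 if l != l'. Define the stale returns tdelta(j) = Sum_{l=1}^{j} alpha(j, j-l) * delta(l), where alpha(j,l) = (1 - B(j)) * Prod_{k=1}^{l} B(j-k). Then for every 1 <= j <= n: E[tdelta(j)^2] = c * (1 - p^j). -/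
open MeasureTheory ProbabilityTheory

lemma prod01_aux {Ω : Type*} (s : Finset ℕ) (f : ℕ → Ω → ℝ)
    (h : ∀ k ω, f k ω = 0 ∨ f k ω = 1) (ω : Ω) :
    (∏ k ∈ s, f k ω) = 0 ∨ (∏ k ∈ s, f k ω) = 1 := by
  classical
  induction s using Finset.induction_on with
  | empty => simp
  | @insert a s hx ih =>
    rw [Finset.prod_insert hx]
    rcases h a ω with h1 | h1 <;> rcases ih with h2 | h2 <;> simp [h1, h2]

/-- Exact finite-sample second moment of a single asset's stale returns: with mutually
independent Bernoulli staleness indicators with constant probability `p`, and efficient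
returns independent of the indicators with `E[δ(l) δ(l')] = c 1{l = l'}`, the stale return
`tδ(j) = ∑_{l=1}^j α(j, j-l) δ(l)` satisfies `E[tδ(j)²] = c (1 - p^j)`. -/
theorem stale_return_second_moment
    {Ω : Type*} [MeasurableSpace Ω] (μ : Measure Ω) [IsProbabilityMeasure μ]
    (n : ℕ) (hn : 1 ≤ n) (p : ℝ) (hp : p ∈ Set.Ico (0:ℝ) 1) (c : ℝ)
    (B δ : ℕ → Ω → ℝ)
    (hBmeas : ∀ k, Measurable (B k))
    (hB01 : ∀ k ω, B k ω = 0 ∨ B k ω = 1)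
    (hP : ∀ k, 1 ≤ k → k ≤ n → μ {ω | B k ω = 1} = ENNReal.ofReal p)
    (hind : iIndepFun
      (fun k : {k : ℕ // k ∈ Finset.Icc 1 n} => B k.1) μ)
    (hδmeas : ∀ l, Measurable (δ l))
    (hδ2 : ∀ l, 1 ≤ l → l ≤ n → MemLp (δ l) 2 μ)
    (hδB : Indep
      (⨆ l ∈ Finset.Icc 1 n, MeasurableSpace.comap (δ l) inferInstance)
      (⨆ k ∈ Finset.Icc 1 n, MeasurableSpace.comap (B k) inferInstance) μ)
    (hmom : ∀ l l', 1 ≤ l → l ≤ n → 1 ≤ l' → l' ≤ n →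
      ∫ ω, δ l ω * δ l' ω ∂μ = if l = l' then c else 0) :
    ∀ j, 1 ≤ j → j ≤ n →
      ∫ ω,
        (∑ l ∈ Finset.Icc 1 j,
          ((1 - B j ω) * ∏ k ∈ Finset.Icc 1 (j - l), B (j - k) ω) * δ l ω) ^ 2 ∂μ
      = c * (1 - p ^ j) := by
  classical
  intro j hj1 hjn
  obtain ⟨hp0, hplt⟩ := hp
  set ι := {k : ℕ // k ∈ Finset.Icc 1 n} with hι
  set f : ι → Ω → ℝ := fun k => B k.1 with hf
  let A : ℕ → Ω → ℝ := fun l ω => (1 - B j ω) * ∏ k ∈ Finset.Icc 1 (j - l), B (j - k) ω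
  show ∫ ω, (∑ l ∈ Finset.Icc 1 j, A l ω * δ l ω) ^ 2 ∂μ = c * (1 - p ^ j)
  have hjmem : j ∈ Finset.Icc 1 n := Finset.mem_Icc.mpr ⟨hj1, hjn⟩
  have hIccn : ∀ l, l ∈ Finset.Icc 1 j → l ∈ Finset.Icc 1 n := by
    intro l hl
    rw [Finset.mem_Icc] at *
    omega
  -- basic properties of A
  have hA01 : ∀ l ω, A l ω = 0 ∨ A l ω = 1 := by
    intro l ω
    have h1 : (1 : ℝ) - B j ω = 0 ∨ (1 : ℝ) - B j ω = 1 := by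
      rcases hB01 j ω with h | h <;> simp [h]
    have h2 := prod01_aux (Finset.Icc 1 (j - l)) (fun k => B (j - k))
      (fun k ω => hB01 _ ω) ω
    rcases h1 with h1 | h1 <;> rcases h2 with h2 | h2 <;> simp [A, h1, h2]
  have hAmeas : ∀ l, Measurable (A l) := fun l =>
    (measurable_const.sub (hBmeas j)).mul
      (Finset.measurable_prod _ fun k _ => hBmeas _)
  have hAsq : ∀ l ω, A l ω * A l ω = A l ω := by
    intro l ω; rcases hA01 l ω with h | h <;> simp [h]
  -- integrability of 0/1-valued functions
  have hbdd : ∀ (g : Ω → ℝ), Measurable g → (∀ ω, g ω = 0 ∨ g ω = 1) →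
      Integrable g μ := by
    intro g hg h01
    refine Integrable.mono' (integrable_const 1) hg.aestronglyMeasurable
      (ae_of_all _ fun ω => ?_)
    rcases h01 ω with h | h <;> simp [h]
  -- integrability of δ l * δ l'
  have hδδint : ∀ l l', l ∈ Finset.Icc 1 j → l' ∈ Finset.Icc 1 j →
      Integrable (fun ω => δ l ω * δ l' ω) μ := by
    intro l l' hl hl'
    obtain ⟨hl1, hl2⟩ := Finset.mem_Icc.mp (hIccn l hl)
    obtain ⟨hl1', hl2'⟩ := Finset.mem_Icc.mp (hIccn l' hl')
    have h1 := (hδ2 l hl1 hl2).integrable_sq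
    have h2 := (hδ2 l' hl1' hl2').integrable_sq
    refine Integrable.mono' ((h1.add h2).div_const 2)
      ((hδmeas l).mul (hδmeas l')).aestronglyMeasurable
      (ae_of_all _ fun ω => ?_)
    have hab : ‖δ l ω * δ l' ω‖ = |δ l ω| * |δ l' ω| := by
      rw [Real.norm_eq_abs, abs_mul]
    rw [hab]
    simp only [Pi.add_apply]
    nlinarith [sq_nonneg (|δ l ω| - |δ l' ω|), sq_abs (δ l ω), sq_abs (δ l' ω),
      abs_nonneg (δ l ω), abs_nonneg (δ l' ω)]
  -- expectation of a single B
  have hEB : ∀ k, 1 ≤ k → k ≤ n → ∫ ω, B k ω ∂μ = p := by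
    intro k hk1 hk2
    have hs : MeasurableSet {ω | B k ω = 1} :=
      (hBmeas k) (measurableSet_singleton 1)
    have heq : (fun ω => B k ω) = Set.indicator {ω | B k ω = 1} (fun _ => (1:ℝ)) := by
      funext ω
      rcases hB01 k ω with h | h
      · rw [h, Set.indicator_of_notMem]
        simp [Set.mem_setOf_eq, h]
      · rw [h, Set.indicator_of_mem]
        exact h
    calc ∫ ω, B k ω ∂μ = ∫ ω, Set.indicator {ω | B k ω = 1} (fun _ => (1:ℝ)) ω ∂μ := by
          rw [← heq]
      _ = (μ {ω | B k ω = 1}).toReal := integral_indicator_one hs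
      _ = p := by rw [hP k hk1 hk2, ENNReal.toReal_ofReal hp0]
  -- expectation of products of B's over subtype finsets
  have prodB : ∀ s : Finset ι, ∫ ω, ∏ k ∈ s, B k.1 ω ∂μ = p ^ s.card := by
    intro s
    induction s using Finset.induction_on with
    | empty => simp
    | @insert a s ha ih =>
      have hindep : IndepFun (f a) (∏ k ∈ s, f k) μ :=
        (hind.indepFun_finsetProd_of_notMem (fun i => hBmeas i.1) ha).symm
      have hprodmeas : Measurable (∏ k ∈ s, f k) := by
        rw [Finset.prod_fn]
        exact Finset.measurable_prod _ fun k _ => hBmeas k.1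
      have hmul := hindep.integral_mul_eq_mul_integral (hBmeas a.1).aestronglyMeasurable
        hprodmeas.aestronglyMeasurable
      have hfun : (fun ω => ∏ k ∈ insert a s, B k.1 ω) = f a * ∏ k ∈ s, f k := by
        funext ω
        rw [Finset.prod_insert ha]
        simp [f, Finset.prod_apply]
      calc ∫ ω, ∏ k ∈ insert a s, B k.1 ω ∂μ
          = integral μ (f a * ∏ k ∈ s, f k) := by rw [hfun]
        _ = (integral μ (f a)) * integral μ (∏ k ∈ s, f k) := hmul
        _ = p * p ^ s.card := by
            obtain ⟨ha1, ha2⟩ := Finset.mem_Icc.mp a.2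
            have h1 : integral μ (f a) = p := hEB a.1 ha1 ha2
            have h2 : integral μ (∏ k ∈ s, f k) = p ^ s.card := by
              rw [show (∏ k ∈ s, f k) = fun ω => ∏ k ∈ s, B k.1 ω from by
                rw [Finset.prod_fn]]
              exact ih
            rw [h1, h2]
        _ = p ^ (insert a s).card := by
            rw [Finset.card_insert_of_notMem ha, pow_succ]
            ring
  -- expectation of A l
  have hEA : ∀ l, l ∈ Finset.Icc 1 j → ∫ ω, A l ω ∂μ = (1 - p) * p ^ (j - l) := by
    intro l hl
    obtain ⟨hl1, hl2⟩ := Finset.mem_Icc.mp hl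
    -- reindex the product to Icc l (j-1)
    have hre : ∀ ω, (∏ k ∈ Finset.Icc 1 (j - l), B (j - k) ω)
        = ∏ i ∈ Finset.Icc l (j - 1), B i ω := by
      intro ω
      refine Finset.prod_bij' (fun k _ => j - k) (fun i _ => j - i) ?_ ?_ ?_ ?_ ?_
      · intro a ha
        simp only [Finset.mem_Icc] at ha ⊢
        omega
      · intro a ha
        simp only [Finset.mem_Icc] at ha ⊢
        omega
      · intro a ha
        simp only [Finset.mem_Icc] at ha
        omega
      · intro a ha
        simp only [Finset.mem_Icc] at ha
        omega
      · intro a ha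
        rfl
    have hsubp : ∀ x ∈ Finset.Icc l (j - 1), x ∈ Finset.Icc 1 n := by
      intro x hx
      rw [Finset.mem_Icc] at *
      omega
    set s_l : Finset ι := (Finset.Icc l (j - 1)).subtype (· ∈ Finset.Icc 1 n) with hs_l
    have hprod_eq : ∀ ω, (∏ k ∈ s_l, B k.1 ω) = ∏ i ∈ Finset.Icc l (j - 1), B i ω :=
      fun ω => Finset.prod_subtype_of_mem (fun i => B i ω) hsubp
    have hcard : s_l.card = j - l := by
      have h1 : (s_l.map (Function.Embedding.subtype _)).card = s_l.card :=
        Finset.card_map _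
      rw [← h1, hs_l, Finset.subtype_map, Finset.filter_true_of_mem hsubp, Nat.card_Icc]
      omega
    have hnotmem : (⟨j, hjmem⟩ : ι) ∉ s_l := by
      rw [hs_l, Finset.mem_subtype, Finset.mem_Icc]
      dsimp only
      omega
    have hindep : IndepFun (f ⟨j, hjmem⟩) (∏ k ∈ s_l, f k) μ :=
      (hind.indepFun_finsetProd_of_notMem (fun i => hBmeas i.1) hnotmem).symm
    have hP01 : ∀ ω, (∏ k ∈ s_l, B k.1 ω) = 0 ∨ (∏ k ∈ s_l, B k.1 ω) = 1 := by
      intro ω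
      rw [hprod_eq ω]
      exact prod01_aux _ _ (fun k ω => hB01 k ω) ω
    have hPmeas : Measurable (fun ω => ∏ k ∈ s_l, B k.1 ω) :=
      Finset.measurable_prod _ fun k _ => hBmeas k.1
    have hPint : Integrable (fun ω => ∏ k ∈ s_l, B k.1 ω) μ := hbdd _ hPmeas hP01
    have hBP01 : ∀ ω, B j ω * (∏ k ∈ s_l, B k.1 ω) = 0 ∨
        B j ω * (∏ k ∈ s_l, B k.1 ω) = 1 := by
      intro ω
      rcases hB01 j ω with h | h <;> rcases hP01 ω with h2 | h2 <;> simp [h, h2]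
    have hBPint : Integrable (fun ω => B j ω * ∏ k ∈ s_l, B k.1 ω) μ :=
      hbdd _ ((hBmeas j).mul hPmeas) hBP01
    have hEP : ∫ ω, ∏ k ∈ s_l, B k.1 ω ∂μ = p ^ (j - l) := by
      rw [prodB s_l, hcard]
    have hEBP : ∫ ω, B j ω * ∏ k ∈ s_l, B k.1 ω ∂μ = p * p ^ (j - l) := by
      have hmul := hindep.integral_mul_eq_mul_integral (hBmeas j).aestronglyMeasurable
        (by rw [Finset.prod_fn]; exact hPmeas.aestronglyMeasurable :
          AEStronglyMeasurable (∏ k ∈ s_l, f k) μ)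
      have hfun : (fun ω => B j ω * ∏ k ∈ s_l, B k.1 ω)
          = f ⟨j, hjmem⟩ * ∏ k ∈ s_l, f k := by
        funext ω
        simp [f, Finset.prod_apply]
      rw [hfun, hmul]
      have h2 : integral μ (∏ k ∈ s_l, f k) = p ^ (j - l) := by
        rw [show (∏ k ∈ s_l, f k) = fun ω => ∏ k ∈ s_l, B k.1 ω from by
          rw [Finset.prod_fn]]
        exact hEP
      have h1 : integral μ (f ⟨j, hjmem⟩) = p := hEB j hj1 hjn
      rw [h1, h2]
    have hsplit : (fun ω => A l ω)
        = fun ω => (∏ k ∈ s_l, B k.1 ω) - B j ω * ∏ k ∈ s_l, B k.1 ω := by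
      funext ω
      show (1 - B j ω) * (∏ k ∈ Finset.Icc 1 (j - l), B (j - k) ω) = _
      rw [hre ω, ← hprod_eq ω]
      ring
    calc ∫ ω, A l ω ∂μ
        = ∫ ω, ((∏ k ∈ s_l, B k.1 ω) - B j ω * ∏ k ∈ s_l, B k.1 ω) ∂μ := by
          rw [hsplit]
      _ = (∫ ω, ∏ k ∈ s_l, B k.1 ω ∂μ) - ∫ ω, B j ω * ∏ k ∈ s_l, B k.1 ω ∂μ :=
          integral_sub hPint hBPint
      _ = p ^ (j - l) - p * p ^ (j - l) := by rw [hEP, hEBP]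
      _ = (1 - p) * p ^ (j - l) := by ring
  -- measurability with respect to the generated σ-algebras
  have hmBk : ∀ k, k ∈ Finset.Icc 1 n → Measurable[⨆ k ∈ Finset.Icc 1 n, MeasurableSpace.comap (B k) inferInstance] (B k) := by
    intro k hk
    exact Measurable.of_comap_le (le_iSup_of_le k (le_iSup_of_le hk le_rfl))
  have hmδl : ∀ l, l ∈ Finset.Icc 1 n → Measurable[⨆ l ∈ Finset.Icc 1 n, MeasurableSpace.comap (δ l) inferInstance] (δ l) := by
    intro l hl
    exact Measurable.of_comap_le (le_iSup_of_le l (le_iSup_of_le hl le_rfl))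
  have hmBA : ∀ l, l ∈ Finset.Icc 1 j → Measurable[⨆ k ∈ Finset.Icc 1 n, MeasurableSpace.comap (B k) inferInstance] (A l) := by
    intro l hl
    obtain ⟨hl1, hl2⟩ := Finset.mem_Icc.mp hl
    refine Measurable.mul (Measurable.sub measurable_const (hmBk j hjmem)) ?_
    refine Finset.measurable_prod _ fun k hk => hmBk _ ?_
    rw [Finset.mem_Icc] at *
    omega
  -- independence of products
  have hIF : ∀ l l', l ∈ Finset.Icc 1 j → l' ∈ Finset.Icc 1 j →
      IndepFun (fun ω => δ l ω * δ l' ω) (fun ω => A l ω * A l' ω) μ := by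
    intro l l' hl hl'
    have h1 : Measurable[⨆ l ∈ Finset.Icc 1 n, MeasurableSpace.comap (δ l) inferInstance] (fun ω => δ l ω * δ l' ω) :=
      (hmδl l (hIccn l hl)).mul (hmδl l' (hIccn l' hl'))
    have h2 : Measurable[⨆ k ∈ Finset.Icc 1 n, MeasurableSpace.comap (B k) inferInstance] (fun ω => A l ω * A l' ω) :=
      (hmBA l hl).mul (hmBA l' hl')
    rw [IndepFun_iff_Indep]
    exact indep_of_indep_of_le_left
      (indep_of_indep_of_le_right hδB h2.comap_le) h1.comap_le
  -- integrability of each term in the expansion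
  have hterm_int : ∀ l l', l ∈ Finset.Icc 1 j → l' ∈ Finset.Icc 1 j →
      Integrable (fun ω => (A l ω * δ l ω) * (A l' ω * δ l' ω)) μ := by
    intro l l' hl hl'
    have heq : (fun ω => (A l ω * δ l ω) * (A l' ω * δ l' ω))
        = fun ω => (A l ω * A l' ω) * (δ l ω * δ l' ω) := by
      funext ω; ring
    rw [heq]
    refine (hδδint l l' hl hl').bdd_mul
      ((hAmeas l).mul (hAmeas l')).aestronglyMeasurable (c := 1) (ae_of_all _ fun ω => ?_)
    rcases hA01 l ω with h | h <;> rcases hA01 l' ω with h2 | h2 <;>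
      simp [h, h2]
  -- value of each term
  have hterm : ∀ l l', l ∈ Finset.Icc 1 j → l' ∈ Finset.Icc 1 j →
      ∫ ω, (A l ω * δ l ω) * (A l' ω * δ l' ω) ∂μ
        = if l = l' then (∫ ω, A l ω ∂μ) * c else 0 := by
    intro l l' hl hl'
    obtain ⟨hl1, hl2⟩ := Finset.mem_Icc.mp (hIccn l hl)
    obtain ⟨hl1', hl2'⟩ := Finset.mem_Icc.mp (hIccn l' hl')
    have h1sm : AEStronglyMeasurable (fun ω => δ l ω * δ l' ω) μ :=
      ((hδmeas l).mul (hδmeas l')).aestronglyMeasurable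
    have h2sm : AEStronglyMeasurable (fun ω => A l ω * A l' ω) μ :=
      ((hAmeas l).mul (hAmeas l')).aestronglyMeasurable
    have hmul := (hIF l l' hl hl').integral_mul_eq_mul_integral h1sm h2sm
    have hstep : ∫ ω, (A l ω * δ l ω) * (A l' ω * δ l' ω) ∂μ
        = (∫ ω, δ l ω * δ l' ω ∂μ) * ∫ ω, A l ω * A l' ω ∂μ := by
      rw [← hmul]
      congr 1
      funext ω
      show (A l ω * δ l ω) * (A l' ω * δ l' ω) = (δ l ω * δ l' ω) * (A l ω * A l' ω)
      ring
    rw [hstep, hmom l l' hl1 hl2 hl1' hl2']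
    by_cases h : l = l'
    · subst h
      rw [if_pos rfl, if_pos rfl]
      have : ∫ ω, A l ω * A l ω ∂μ = ∫ ω, A l ω ∂μ := by
        congr 1
        funext ω
        exact hAsq l ω
      rw [this]
      ring
    · rw [if_neg h, if_neg h, zero_mul]
  -- expand the square and integrate term by term
  have expand : ∀ ω, (∑ l ∈ Finset.Icc 1 j, A l ω * δ l ω) ^ 2
      = ∑ l ∈ Finset.Icc 1 j, ∑ l' ∈ Finset.Icc 1 j,
          (A l ω * δ l ω) * (A l' ω * δ l' ω) := by
    intro ω
    rw [sq, Finset.sum_mul_sum]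
  calc ∫ ω, (∑ l ∈ Finset.Icc 1 j, A l ω * δ l ω) ^ 2 ∂μ
      = ∫ ω, ∑ l ∈ Finset.Icc 1 j, ∑ l' ∈ Finset.Icc 1 j,
          (A l ω * δ l ω) * (A l' ω * δ l' ω) ∂μ := by
        congr 1
        funext ω
        exact expand ω
    _ = ∑ l ∈ Finset.Icc 1 j, ∑ l' ∈ Finset.Icc 1 j,
          ∫ ω, (A l ω * δ l ω) * (A l' ω * δ l' ω) ∂μ := by
        rw [integral_finset_sum _ fun l hl =>
          integrable_finset_sum _ fun l' hl' => hterm_int l l' hl hl']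
        exact Finset.sum_congr rfl fun l hl =>
          integral_finset_sum _ fun l' hl' => hterm_int l l' hl hl'
    _ = ∑ l ∈ Finset.Icc 1 j, (∫ ω, A l ω ∂μ) * c := by
        refine Finset.sum_congr rfl fun l hl => ?_
        rw [Finset.sum_congr rfl fun l' hl' => hterm l l' hl hl']
        rw [Finset.sum_ite_eq, if_pos hl]
    _ = ∑ l ∈ Finset.Icc 1 j, (1 - p) * p ^ (j - l) * c := by
        refine Finset.sum_congr rfl fun l hl => ?_
        rw [hEA l hl]
    _ = ∑ m ∈ Finset.range j, (1 - p) * p ^ m * c := by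
        refine Finset.sum_bij' (fun l _ => j - l) (fun m _ => j - m) ?_ ?_ ?_ ?_ ?_
        · intro a ha
          simp only [Finset.mem_Icc] at ha
          simp only [Finset.mem_range]
          omega
        · intro a ha
          simp only [Finset.mem_range] at ha
          simp only [Finset.mem_Icc]
          omega
        · intro a ha
          simp only [Finset.mem_Icc] at ha
          omega
        · intro a ha
          simp only [Finset.mem_range] at ha
          omega
        · intro a ha
          rfl
    _ = c * (1 - p ^ j) := by
        have hg := geom_sum_mul p j
        have hfac : ∑ m ∈ Finset.range j, (1 - p) * p ^ m * c
            = (∑ m ∈ Finset.range j, p ^ m) * ((1 - p) * c) := by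
          rw [Finset.sum_mul]
          exact Finset.sum_congr rfl fun m _ => by ring
        rw [hfac]
        linear_combination (-c) * hg
end

section
/- Under the two-asset stale return setup (mutually independent Bernoulli staleness indicators {B_i(j)}, {B_m(j)} with probabilities p_i, p_m in [0,1), efficient returns with E[delta_i(l)*delta_m(l')] = c*1{l=l'} and independent of the indicators, stale returns tdelta_a(j) = Sum_{l=1}^{j} alpha_a(j,j-l)*delta_a(l)), the average cross-moment satisfies the finite-sample bound: | (1/n) * Sum_{j=1}^{n} E[tdelta_i(j)*tdelta_m(j)] - c * phi(p_i, p_m) | <= |c| / (n * (1 - p_i*p_m)), where phi(x,y) = (1-x)*(1-y)/(1-x*y). -/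
open MeasureTheory ProbabilityTheory

lemma indicator_int {Ω : Type*} [MeasurableSpace Ω] (μ : Measure Ω) [IsProbabilityMeasure μ]
    (B : Ω → ℝ) (p : ℝ) (hp : 0 ≤ p) (hmeas : Measurable B)
    (h01 : ∀ ω, B ω = 0 ∨ B ω = 1) (hP : μ {ω | B ω = 1} = ENNReal.ofReal p) :
    Integrable B μ ∧ ∫ ω, B ω ∂μ = p := by
  have hset : MeasurableSet {ω | B ω = 1} := hmeas (measurableSet_singleton 1)
  have hrep : B = Set.indicator {ω | B ω = 1} (fun _ => (1:ℝ)) := by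
    funext ω
    rcases h01 ω with h | h <;>
      simp [Set.indicator_apply, Set.mem_setOf_eq, h]
  constructor
  · rw [hrep]; exact (integrable_const (1:ℝ)).indicator hset
  · rw [hrep]
    have := integral_indicator_one (μ := μ) hset
    simp [hP, ENNReal.toReal_ofReal hp, Measure.real] at this; exact this

lemma integral_prod_iIndep {Ω ι : Type*} [MeasurableSpace Ω] {μ : Measure Ω}
    [IsProbabilityMeasure μ] (f : ι → Ω → ℝ)
    (hind : iIndepFun f μ) (hmeas : ∀ i, Measurable (f i))
    (T : Finset ι) :
    ∫ ω, ∏ s ∈ T, f s ω ∂μ = ∏ s ∈ T, ∫ ω, f s ω ∂μ := by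
  classical
  induction T using Finset.induction_on with
  | empty => simp
  | @insert a T ha ih =>
    have hprodmeas : Measurable (fun ω => ∏ s ∈ T, f s ω) :=
      Finset.measurable_prod T (fun i _ => hmeas i)
    have hip : IndepFun (f a) (fun ω => ∏ s ∈ T, f s ω) μ := by
      have := hind.indepFun_finsetProd_of_notMem hmeas ha
      have heq : (∏ j ∈ T, f j) = fun ω => ∏ s ∈ T, f s ω := by
        funext ω; simp
      rw [heq] at this
      exact this.symm
    calc ∫ ω, ∏ s ∈ insert a T, f s ω ∂μ
        = ∫ ω, f a ω * ∏ s ∈ T, f s ω ∂μ := by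
          congr 1; funext ω; exact Finset.prod_insert ha
      _ = (∫ ω, f a ω ∂μ) * ∫ ω, ∏ s ∈ T, f s ω ∂μ :=
          hip.integral_fun_mul_eq_mul_integral (hmeas a).aestronglyMeasurable hprodmeas.aestronglyMeasurable
      _ = ∏ s ∈ insert a T, ∫ ω, f s ω ∂μ := by rw [Finset.prod_insert ha, ih]

lemma prodT_eq {n j l : ℕ} (h1 : 1 ≤ l) (hlj : l ≤ j) (hjn : j ≤ n) (u v : ℕ → ℝ) :
    (∏ s ∈ (((Finset.Icc l j).subtype (· ∈ Finset.Icc 1 n)) ×ˢ (Finset.univ : Finset Bool)),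
      (if (s.1 : ℕ) = j then 1 - (if s.2 then u s.1 else v s.1)
        else (if s.2 then u s.1 else v s.1)))
    = ((1 - u j) * ∏ k ∈ Finset.Icc 1 (j - l), u (j - k)) *
      ((1 - v j) * ∏ k ∈ Finset.Icc 1 (j - l), v (j - k)) := by
  classical
  have key : ∀ w : ℕ → ℝ, (∏ k ∈ Finset.Icc 1 (j - l), w (j - k))
      = ∏ k ∈ Finset.Icc l (j - 1), w k := by
    intro w
    refine Finset.prod_nbij' (fun k => j - k) (fun k => j - k) ?_ ?_ ?_ ?_
      (fun a _ => rfl) <;>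
      · intro k hk
        simp only [Finset.mem_Icc] at *
        omega
  rw [Finset.prod_product]
  have hsub : ∀ (g : ℕ → ℝ),
      (∏ a ∈ (Finset.Icc l j).subtype (· ∈ Finset.Icc 1 n), g (a : ℕ))
        = ∏ k ∈ Finset.Icc l j, g k := by
    intro g
    rw [Finset.prod_subtype_eq_prod_filter]
    congr 1
    apply Finset.filter_true_of_mem
    intro x hx
    simp only [Finset.mem_Icc] at *
    omega
  have hstep : (∏ a ∈ (Finset.Icc l j).subtype (· ∈ Finset.Icc 1 n),
      ∏ b : Bool, (if ((a : ℕ) = j) then 1 - (if b then u a else v a)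
        else (if b then u a else v a)))
      = ∏ k ∈ Finset.Icc l j,
        ∏ b : Bool, (if (k = j) then 1 - (if b then u k else v k)
          else (if b then u k else v k)) :=
    hsub (fun k => ∏ b : Bool, (if (k = j) then 1 - (if b then u k else v k)
          else (if b then u k else v k)))
  rw [hstep]
  have hins : Finset.Icc l j = insert j (Finset.Icc l (j - 1)) := by
    ext x
    simp only [Finset.mem_Icc, Finset.mem_insert]
    omega
  have hnotmem : j ∉ Finset.Icc l (j - 1) := by
    simp only [Finset.mem_Icc]; omega
  rw [hins, Finset.prod_insert hnotmem]
  have htop : (∏ b : Bool, (if (j = j) then 1 - (if b then u j else v j)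
      else (if b then u j else v j))) = (1 - u j) * (1 - v j) := by
    simp [Fintype.prod_bool]
  have hrest : (∏ k ∈ Finset.Icc l (j - 1),
      ∏ b : Bool, (if (k = j) then 1 - (if b then u k else v k)
        else (if b then u k else v k)))
      = (∏ k ∈ Finset.Icc l (j - 1), u k) * ∏ k ∈ Finset.Icc l (j - 1), v k := by
    rw [← Finset.prod_mul_distrib]
    apply Finset.prod_congr rfl
    intro k hk
    have : k ≠ j := by simp only [Finset.mem_Icc] at hk; omega
    simp [Fintype.prod_bool, this]
  rw [htop, hrest, key u, key v]
  ring

lemma EA_eq {Ω : Type*} [MeasurableSpace Ω] (μ : Measure Ω) [IsProbabilityMeasure μ]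
    (n : ℕ) (p₁ p₂ : ℝ)
    (hp₁ : p₁ ∈ Set.Ico (0:ℝ) 1) (hp₂ : p₂ ∈ Set.Ico (0:ℝ) 1)
    (Bi Bm : ℕ → Ω → ℝ)
    (hBmeas : ∀ k, Measurable (Bi k) ∧ Measurable (Bm k))
    (hB01 : ∀ k ω, (Bi k ω = 0 ∨ Bi k ω = 1) ∧ (Bm k ω = 0 ∨ Bm k ω = 1))
    (hPi : ∀ k, 1 ≤ k → k ≤ n → μ {ω | Bi k ω = 1} = ENNReal.ofReal p₁)
    (hPm : ∀ k, 1 ≤ k → k ≤ n → μ {ω | Bm k ω = 1} = ENNReal.ofReal p₂)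
    (hind : iIndepFun
      (fun k : {k : ℕ // k ∈ Finset.Icc 1 n} × Bool =>
        fun ω => if k.2 then Bi k.1.1 ω else Bm k.1.1 ω) μ)
    (j l : ℕ) (h1l : 1 ≤ l) (hlj : l ≤ j) (hjn : j ≤ n) :
    ∫ ω, ((1 - Bi j ω) * ∏ k ∈ Finset.Icc 1 (j - l), Bi (j - k) ω) *
        ((1 - Bm j ω) * ∏ k ∈ Finset.Icc 1 (j - l), Bm (j - k) ω) ∂μ
      = (1 - p₁) * (1 - p₂) * (p₁ * p₂) ^ (j - l) := by
  classical
  set ι := ({k : ℕ // k ∈ Finset.Icc 1 n} × Bool)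
  let g : ι → ℝ → ℝ := fun s x => if (s.1 : ℕ) = j then 1 - x else x
  have hg : ∀ s, Measurable (g s) := by
    intro s
    by_cases h : (s.1 : ℕ) = j <;> simp only [g, h, if_true, if_false]
    · exact measurable_const.sub measurable_id
    · exact measurable_id
  let F : ι → Ω → ℝ := fun s =>
    g s ∘ (fun ω => if s.2 then Bi s.1.1 ω else Bm s.1.1 ω)
  have hFind : iIndepFun F μ := hind.comp g hg
  have hFmeas : ∀ s, Measurable (F s) := by
    intro s
    apply (hg s).comp
    rcases s with ⟨k, b⟩
    cases b <;> simp only [if_true, if_false]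
    · exact (hBmeas k.1).2
    · exact (hBmeas k.1).1
  set T := (((Finset.Icc l j).subtype (· ∈ Finset.Icc 1 n)) ×ˢ (Finset.univ : Finset Bool))
    with hT
  have hpt : ∀ ω, ((1 - Bi j ω) * ∏ k ∈ Finset.Icc 1 (j - l), Bi (j - k) ω) *
      ((1 - Bm j ω) * ∏ k ∈ Finset.Icc 1 (j - l), Bm (j - k) ω)
      = ∏ s ∈ T, F s ω := by
    intro ω
    rw [← prodT_eq h1l hlj hjn (fun k => Bi k ω) (fun k => Bm k ω)]
    rfl
  have h1 : ∫ ω, ((1 - Bi j ω) * ∏ k ∈ Finset.Icc 1 (j - l), Bi (j - k) ω) *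
      ((1 - Bm j ω) * ∏ k ∈ Finset.Icc 1 (j - l), Bm (j - k) ω) ∂μ
      = ∏ s ∈ T, ∫ ω, F s ω ∂μ := by
    rw [show (fun ω => ((1 - Bi j ω) * ∏ k ∈ Finset.Icc 1 (j - l), Bi (j - k) ω) *
      ((1 - Bm j ω) * ∏ k ∈ Finset.Icc 1 (j - l), Bm (j - k) ω))
        = fun ω => ∏ s ∈ T, F s ω from funext hpt]
    exact integral_prod_iIndep F hFind hFmeas T
  have hval : ∀ s : ι, s ∈ T → ∫ ω, F s ω ∂μ
      = (if (s.1 : ℕ) = j then 1 - (if s.2 then p₁ else p₂)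
          else (if s.2 then p₁ else p₂)) := by
    rintro ⟨k, b⟩ _
    have hk := k.2
    simp only [Finset.mem_Icc] at hk
    have hBiI := indicator_int μ (Bi k.1) p₁ hp₁.1 (hBmeas k.1).1
      (fun ω => (hB01 k.1 ω).1) (hPi k.1 hk.1 hk.2)
    have hBmI := indicator_int μ (Bm k.1) p₂ hp₂.1 (hBmeas k.1).2
      (fun ω => (hB01 k.1 ω).2) (hPm k.1 hk.1 hk.2)
    by_cases hkj : (k : ℕ) = j <;> [rw [hkj] at hBiI hBmI; skip] <;> cases b <;>
      simp only [F, g, Function.comp, hkj, if_true, if_false, Bool.false_eq_true]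
    · rw [integral_sub (integrable_const 1) hBmI.1]
      simp [hBmI.2]
    · rw [integral_sub (integrable_const 1) hBiI.1]
      simp [hBiI.2]
    · simp [hBmI.2]
    · simp [hBiI.2]
  rw [h1, Finset.prod_congr rfl hval,
    prodT_eq h1l hlj hjn (fun _ => p₁) (fun _ => p₂)]
  simp only [Finset.prod_const, Nat.card_Icc, Nat.add_sub_cancel]
  rw [mul_pow]
  ring

lemma perj_eq {Ω : Type*} [MeasurableSpace Ω] (μ : Measure Ω) [IsProbabilityMeasure μ]
    (n : ℕ) (p₁ p₂ : ℝ)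
    (hp₁ : p₁ ∈ Set.Ico (0:ℝ) 1) (hp₂ : p₂ ∈ Set.Ico (0:ℝ) 1) (c : ℝ)
    (Bi Bm δi δm : ℕ → Ω → ℝ)
    (hBmeas : ∀ k, Measurable (Bi k) ∧ Measurable (Bm k))
    (hB01 : ∀ k ω, (Bi k ω = 0 ∨ Bi k ω = 1) ∧ (Bm k ω = 0 ∨ Bm k ω = 1))
    (hPi : ∀ k, 1 ≤ k → k ≤ n → μ {ω | Bi k ω = 1} = ENNReal.ofReal p₁)
    (hPm : ∀ k, 1 ≤ k → k ≤ n → μ {ω | Bm k ω = 1} = ENNReal.ofReal p₂)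
    (hind : iIndepFun
      (fun k : {k : ℕ // k ∈ Finset.Icc 1 n} × Bool =>
        fun ω => if k.2 then Bi k.1.1 ω else Bm k.1.1 ω) μ)
    (hδmeas : ∀ l, Measurable (δi l) ∧ Measurable (δm l))
    (hδ2 : ∀ l, 1 ≤ l → l ≤ n → MemLp (δi l) 2 μ ∧ MemLp (δm l) 2 μ)
    (hδB : Indep
      (⨆ l ∈ Finset.Icc 1 n,
        MeasurableSpace.comap (δi l) inferInstance ⊔ MeasurableSpace.comap (δm l) inferInstance)
      (⨆ k ∈ Finset.Icc 1 n,
        MeasurableSpace.comap (Bi k) inferInstance ⊔ MeasurableSpace.comap (Bm k) inferInstance)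
      μ)
    (hmom : ∀ l l', 1 ≤ l → l ≤ n → 1 ≤ l' → l' ≤ n →
      ∫ ω, δi l ω * δm l' ω ∂μ = if l = l' then c else 0)
    (j : ℕ) (hj1 : 1 ≤ j) (hjn : j ≤ n) :
    ∫ ω,
        (∑ l ∈ Finset.Icc 1 j,
          ((1 - Bi j ω) * ∏ k ∈ Finset.Icc 1 (j - l), Bi (j - k) ω) * δi l ω)
        * (∑ l ∈ Finset.Icc 1 j,
          ((1 - Bm j ω) * ∏ k ∈ Finset.Icc 1 (j - l), Bm (j - k) ω) * δm l ω) ∂μ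
      = c * ((1 - p₁) * (1 - p₂)) * ∑ l ∈ Finset.Icc 1 j, (p₁ * p₂) ^ (j - l) := by
  classical
  set Ai : ℕ → Ω → ℝ :=
    fun l ω => (1 - Bi j ω) * ∏ k ∈ Finset.Icc 1 (j - l), Bi (j - k) ω with hAidef
  set Am : ℕ → Ω → ℝ :=
    fun l ω => (1 - Bm j ω) * ∏ k ∈ Finset.Icc 1 (j - l), Bm (j - k) ω with hAmdef
  change ∫ ω, (∑ l ∈ Finset.Icc 1 j, Ai l ω * δi l ω) *
      (∑ l ∈ Finset.Icc 1 j, Am l ω * δm l ω) ∂μ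
    = c * ((1 - p₁) * (1 - p₂)) * ∑ l ∈ Finset.Icc 1 j, (p₁ * p₂) ^ (j - l)
  have hBi01 : ∀ k ω, 0 ≤ Bi k ω ∧ Bi k ω ≤ 1 := by
    intro k ω; rcases (hB01 k ω).1 with h | h <;> rw [h] <;> norm_num
  have hBm01 : ∀ k ω, 0 ≤ Bm k ω ∧ Bm k ω ≤ 1 := by
    intro k ω; rcases (hB01 k ω).2 with h | h <;> rw [h] <;> norm_num
  have hAimeas : ∀ l, Measurable (Ai l) := fun l =>
    (measurable_const.sub (hBmeas j).1).mul
      (Finset.measurable_prod _ (fun k _ => (hBmeas (j - k)).1))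
  have hAmmeas : ∀ l, Measurable (Am l) := fun l =>
    (measurable_const.sub (hBmeas j).2).mul
      (Finset.measurable_prod _ (fun k _ => (hBmeas (j - k)).2))
  have hAi01 : ∀ l ω, 0 ≤ Ai l ω ∧ Ai l ω ≤ 1 := by
    intro l ω
    have h1 : 0 ≤ 1 - Bi j ω := by linarith [(hBi01 j ω).2]
    have h2 : 1 - Bi j ω ≤ 1 := by linarith [(hBi01 j ω).1]
    have h3 : 0 ≤ ∏ k ∈ Finset.Icc 1 (j - l), Bi (j - k) ω :=
      Finset.prod_nonneg (fun k _ => (hBi01 (j - k) ω).1)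
    have h4 : ∏ k ∈ Finset.Icc 1 (j - l), Bi (j - k) ω ≤ 1 :=
      Finset.prod_le_one (fun k _ => (hBi01 (j - k) ω).1) (fun k _ => (hBi01 (j - k) ω).2)
    exact ⟨mul_nonneg h1 h3, mul_le_one₀ h2 h3 h4⟩
  have hAm01 : ∀ l ω, 0 ≤ Am l ω ∧ Am l ω ≤ 1 := by
    intro l ω
    have h1 : 0 ≤ 1 - Bm j ω := by linarith [(hBm01 j ω).2]
    have h2 : 1 - Bm j ω ≤ 1 := by linarith [(hBm01 j ω).1]
    have h3 : 0 ≤ ∏ k ∈ Finset.Icc 1 (j - l), Bm (j - k) ω :=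
      Finset.prod_nonneg (fun k _ => (hBm01 (j - k) ω).1)
    have h4 : ∏ k ∈ Finset.Icc 1 (j - l), Bm (j - k) ω ≤ 1 :=
      Finset.prod_le_one (fun k _ => (hBm01 (j - k) ω).1) (fun k _ => (hBm01 (j - k) ω).2)
    exact ⟨mul_nonneg h1 h3, mul_le_one₀ h2 h3 h4⟩
  have hδδint : ∀ l l', 1 ≤ l → l ≤ n → 1 ≤ l' → l' ≤ n →
      Integrable (fun ω => δi l ω * δm l' ω) μ := by
    intro l l' h1 h2 h3 h4
    have hm : MemLp (δi l • δm l') 1 μ :=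
      (hδ2 l' h3 h4).2.smul (hδ2 l h1 h2).1
    have h5 := hm.integrable le_rfl
    exact h5
  have htermint : ∀ l l', 1 ≤ l → l ≤ n → 1 ≤ l' → l' ≤ n →
      Integrable (fun ω => (Ai l ω * δi l ω) * (Am l' ω * δm l' ω)) μ := by
    intro l l' h1 h2 h3 h4
    have heq : (fun ω => (Ai l ω * δi l ω) * (Am l' ω * δm l' ω))
        = fun ω => (Ai l ω * Am l' ω) * (δi l ω * δm l' ω) := by
      funext ω; ring
    rw [heq]
    refine Integrable.bdd_mul (c := 1) (hδδint l l' h1 h2 h3 h4)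
      ((hAimeas l).mul (hAmmeas l')).aestronglyMeasurable (ae_of_all _ (fun ω => ?_))
    rw [Real.norm_eq_abs, abs_mul]
    have := hAi01 l ω; have := hAm01 l' ω
    rw [abs_of_nonneg (hAi01 l ω).1, abs_of_nonneg (hAm01 l' ω).1]
    exact mul_le_one₀ (hAi01 l ω).2 (hAm01 l' ω).1 (hAm01 l' ω).2
  -- measurability wrt the sub-σ-algebras
  have hδmeasM : ∀ l, l ∈ Finset.Icc 1 n →
      Measurable[⨆ l ∈ Finset.Icc 1 n,
        MeasurableSpace.comap (δi l) inferInstance ⊔ MeasurableSpace.comap (δm l) inferInstance]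
        (δi l) ∧
      Measurable[⨆ l ∈ Finset.Icc 1 n,
        MeasurableSpace.comap (δi l) inferInstance ⊔ MeasurableSpace.comap (δm l) inferInstance]
        (δm l) := by
    intro l hl
    constructor
    · rw [measurable_iff_comap_le]
      exact le_trans le_sup_left
        (le_iSup₂ (f := fun l (_ : l ∈ Finset.Icc 1 n) =>
          MeasurableSpace.comap (δi l) inferInstance ⊔
            MeasurableSpace.comap (δm l) inferInstance) l hl)
    · rw [measurable_iff_comap_le]
      exact le_trans le_sup_right
        (le_iSup₂ (f := fun l (_ : l ∈ Finset.Icc 1 n) =>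
          MeasurableSpace.comap (δi l) inferInstance ⊔
            MeasurableSpace.comap (δm l) inferInstance) l hl)
  have hBmeasM : ∀ k, k ∈ Finset.Icc 1 n →
      Measurable[⨆ k ∈ Finset.Icc 1 n,
        MeasurableSpace.comap (Bi k) inferInstance ⊔ MeasurableSpace.comap (Bm k) inferInstance]
        (Bi k) ∧
      Measurable[⨆ k ∈ Finset.Icc 1 n,
        MeasurableSpace.comap (Bi k) inferInstance ⊔ MeasurableSpace.comap (Bm k) inferInstance]
        (Bm k) := by
    intro k hk
    constructor
    · rw [measurable_iff_comap_le]
      exact le_trans le_sup_left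
        (le_iSup₂ (f := fun k (_ : k ∈ Finset.Icc 1 n) =>
          MeasurableSpace.comap (Bi k) inferInstance ⊔
            MeasurableSpace.comap (Bm k) inferInstance) k hk)
    · rw [measurable_iff_comap_le]
      exact le_trans le_sup_right
        (le_iSup₂ (f := fun k (_ : k ∈ Finset.Icc 1 n) =>
          MeasurableSpace.comap (Bi k) inferInstance ⊔
            MeasurableSpace.comap (Bm k) inferInstance) k hk)
  have key : ∀ l ∈ Finset.Icc 1 j, ∀ l' ∈ Finset.Icc 1 j,
      ∫ ω, (Ai l ω * δi l ω) * (Am l' ω * δm l' ω) ∂μ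
        = if l = l' then ((1 - p₁) * (1 - p₂) * (p₁ * p₂) ^ (j - l)) * c else 0 := by
    intro l hl l' hl'
    simp only [Finset.mem_Icc] at hl hl'
    have hln : l ≤ n := le_trans hl.2 hjn
    have hl'n : l' ≤ n := le_trans hl'.2 hjn
    have hYmeasM : Measurable[⨆ k ∈ Finset.Icc 1 n,
        MeasurableSpace.comap (Bi k) inferInstance ⊔ MeasurableSpace.comap (Bm k) inferInstance]
        (fun ω => Ai l ω * Am l' ω) := by
      apply Measurable.mul
      · apply Measurable.mul
        · exact measurable_const.sub (hBmeasM j (by simp only [Finset.mem_Icc]; omega)).1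
        · exact Finset.measurable_prod _ (fun k hk => by
            simp only [Finset.mem_Icc] at hk
            exact (hBmeasM (j - k) (by simp only [Finset.mem_Icc]; omega)).1)
      · apply Measurable.mul
        · exact measurable_const.sub (hBmeasM j (by simp only [Finset.mem_Icc]; omega)).2
        · exact Finset.measurable_prod _ (fun k hk => by
            simp only [Finset.mem_Icc] at hk
            exact (hBmeasM (j - k) (by simp only [Finset.mem_Icc]; omega)).2)
    have hXmeasM : Measurable[⨆ l ∈ Finset.Icc 1 n,
        MeasurableSpace.comap (δi l) inferInstance ⊔ MeasurableSpace.comap (δm l) inferInstance]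
        (fun ω => δi l ω * δm l' ω) :=
      ((hδmeasM l (by simp only [Finset.mem_Icc]; omega)).1).mul
        ((hδmeasM l' (by simp only [Finset.mem_Icc]; omega)).2)
    have hIF : IndepFun (fun ω => δi l ω * δm l' ω) (fun ω => Ai l ω * Am l' ω) μ := by
      have h := indep_of_indep_of_le_right
        (indep_of_indep_of_le_left hδB (measurable_iff_comap_le.mp hXmeasM))
        (measurable_iff_comap_le.mp hYmeasM)
      exact (ProbabilityTheory.IndepFun_iff_Indep _ _ _).2 h
    have heq : ∫ ω, (Ai l ω * δi l ω) * (Am l' ω * δm l' ω) ∂μ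
        = ∫ ω, (Ai l ω * Am l' ω) * (δi l ω * δm l' ω) ∂μ := by
      congr 1; funext ω; ring
    rw [heq, hIF.symm.integral_fun_mul_eq_mul_integral ((hAimeas l).mul (hAmmeas l')).aestronglyMeasurable
      (((hδmeas l).1.mul (hδmeas l').2)).aestronglyMeasurable,
      hmom l l' hl.1 hln hl'.1 hl'n]
    by_cases hll : l = l'
    · subst hll
      rw [if_pos rfl, if_pos rfl]
      rw [show ∫ ω, Ai l ω * Am l ω ∂μ
          = (1 - p₁) * (1 - p₂) * (p₁ * p₂) ^ (j - l) from
        EA_eq μ n p₁ p₂ hp₁ hp₂ Bi Bm hBmeas hB01 hPi hPm hind j l hl.1 hl.2 hjn]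
    · rw [if_neg hll, if_neg hll, mul_zero]
  have hexpand : ∫ ω,
      (∑ l ∈ Finset.Icc 1 j, Ai l ω * δi l ω) * (∑ l ∈ Finset.Icc 1 j, Am l ω * δm l ω) ∂μ
      = ∑ l ∈ Finset.Icc 1 j, ∑ l' ∈ Finset.Icc 1 j,
          ∫ ω, (Ai l ω * δi l ω) * (Am l' ω * δm l' ω) ∂μ := by
    have hpt : (fun ω =>
        (∑ l ∈ Finset.Icc 1 j, Ai l ω * δi l ω) * (∑ l ∈ Finset.Icc 1 j, Am l ω * δm l ω))
        = fun ω => ∑ l ∈ Finset.Icc 1 j, ∑ l' ∈ Finset.Icc 1 j,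
            (Ai l ω * δi l ω) * (Am l' ω * δm l' ω) := by
      funext ω
      exact Finset.sum_mul_sum _ _ _ _
    rw [hpt]
    rw [integral_finset_sum _ (fun l hl => ?_)]
    · exact Finset.sum_congr rfl (fun l hl => by
        rw [integral_finset_sum _ (fun l' hl' => by
          simp only [Finset.mem_Icc] at hl hl'
          exact htermint l l' hl.1 (le_trans hl.2 hjn) hl'.1 (le_trans hl'.2 hjn))])
    · apply integrable_finset_sum
      intro l' hl'
      simp only [Finset.mem_Icc] at hl hl'
      exact htermint l l' hl.1 (le_trans hl.2 hjn) hl'.1 (le_trans hl'.2 hjn)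
  rw [hexpand, Finset.sum_congr rfl (fun l hl =>
    Finset.sum_congr rfl (fun l' hl' => key l hl l' hl'))]
  have hinner : ∀ l ∈ Finset.Icc 1 j,
      (∑ l' ∈ Finset.Icc 1 j,
        if l = l' then ((1 - p₁) * (1 - p₂) * (p₁ * p₂) ^ (j - l)) * c else 0)
      = c * ((1 - p₁) * (1 - p₂)) * (p₁ * p₂) ^ (j - l) := by
    intro l hl
    rw [Finset.sum_ite_eq, if_pos hl]
    ring
  rw [Finset.sum_congr rfl hinner, ← Finset.mul_sum]

/-- Finite-sample bound for the staleness attenuation of averaged cross-moments: under the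
two-asset stale return setup, the average cross-moment of the stale returns is within
`|c| / (n (1 - p₁ p₂))` of `c * φ(p₁, p₂)`, where `φ(x,y) = (1-x)(1-y)/(1-xy)`. -/
theorem stale_return_average_cross_moment_bound
    {Ω : Type*} [MeasurableSpace Ω] (μ : Measure Ω) [IsProbabilityMeasure μ]
    (n : ℕ) (hn : 1 ≤ n) (p₁ p₂ : ℝ)
    (hp₁ : p₁ ∈ Set.Ico (0:ℝ) 1) (hp₂ : p₂ ∈ Set.Ico (0:ℝ) 1) (c : ℝ)
    (Bi Bm δi δm : ℕ → Ω → ℝ)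
    (hBmeas : ∀ k, Measurable (Bi k) ∧ Measurable (Bm k))
    (hB01 : ∀ k ω, (Bi k ω = 0 ∨ Bi k ω = 1) ∧ (Bm k ω = 0 ∨ Bm k ω = 1))
    (hPi : ∀ k, 1 ≤ k → k ≤ n → μ {ω | Bi k ω = 1} = ENNReal.ofReal p₁)
    (hPm : ∀ k, 1 ≤ k → k ≤ n → μ {ω | Bm k ω = 1} = ENNReal.ofReal p₂)
    (hind : iIndepFun
      (fun k : {k : ℕ // k ∈ Finset.Icc 1 n} × Bool =>
        fun ω => if k.2 then Bi k.1.1 ω else Bm k.1.1 ω) μ)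
    (hδmeas : ∀ l, Measurable (δi l) ∧ Measurable (δm l))
    (hδ2 : ∀ l, 1 ≤ l → l ≤ n → MemLp (δi l) 2 μ ∧ MemLp (δm l) 2 μ)
    (hδB : Indep
      (⨆ l ∈ Finset.Icc 1 n,
        MeasurableSpace.comap (δi l) inferInstance ⊔ MeasurableSpace.comap (δm l) inferInstance)
      (⨆ k ∈ Finset.Icc 1 n,
        MeasurableSpace.comap (Bi k) inferInstance ⊔ MeasurableSpace.comap (Bm k) inferInstance)
      μ)
    (hmom : ∀ l l', 1 ≤ l → l ≤ n → 1 ≤ l' → l' ≤ n →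
      ∫ ω, δi l ω * δm l' ω ∂μ = if l = l' then c else 0) :
    |(1 / (n : ℝ)) *
        (∑ j ∈ Finset.Icc 1 n,
          ∫ ω,
            (∑ l ∈ Finset.Icc 1 j,
              ((1 - Bi j ω) * ∏ k ∈ Finset.Icc 1 (j - l), Bi (j - k) ω) * δi l ω)
            * (∑ l ∈ Finset.Icc 1 j,
              ((1 - Bm j ω) * ∏ k ∈ Finset.Icc 1 (j - l), Bm (j - k) ω) * δm l ω) ∂μ)
      - c * ((1 - p₁) * (1 - p₂) / (1 - p₁ * p₂))|
      ≤ |c| / (n * (1 - p₁ * p₂)) := by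
    classical
  have hq0 : 0 ≤ p₁ * p₂ := mul_nonneg hp₁.1 hp₂.1
  have hq1 : p₁ * p₂ < 1 := by nlinarith [hp₁.1, hp₁.2, hp₂.1, hp₂.2]
  set q := p₁ * p₂ with hqdef
  set A := (1 - p₁) * (1 - p₂) with hAdef
  have hnpos : (0:ℝ) < (n:ℝ) := by
    have : 0 < n := hn
    exact_mod_cast this
  have h1q : (0:ℝ) < 1 - q := by linarith
  have hA0 : 0 ≤ A := mul_nonneg (by linarith [hp₁.2]) (by linarith [hp₂.2])
  have hA1 : A ≤ 1 - q := by rw [hAdef, hqdef]; nlinarith [hp₁.1, hp₁.2, hp₂.1, hp₂.2]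
  have hsum : (∑ j ∈ Finset.Icc 1 n,
      ∫ ω,
        (∑ l ∈ Finset.Icc 1 j,
          ((1 - Bi j ω) * ∏ k ∈ Finset.Icc 1 (j - l), Bi (j - k) ω) * δi l ω)
        * (∑ l ∈ Finset.Icc 1 j,
          ((1 - Bm j ω) * ∏ k ∈ Finset.Icc 1 (j - l), Bm (j - k) ω) * δm l ω) ∂μ)
      = ∑ j ∈ Finset.Icc 1 n, c * A * ∑ l ∈ Finset.Icc 1 j, q ^ (j - l) := by
    refine Finset.sum_congr rfl (fun j hj => ?_)
    simp only [Finset.mem_Icc] at hj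
    exact perj_eq μ n p₁ p₂ hp₁ hp₂ c Bi Bm δi δm hBmeas hB01 hPi hPm hind
      hδmeas hδ2 hδB hmom j hj.1 hj.2
  have hgeom : ∀ j : ℕ, (∑ l ∈ Finset.Icc 1 j, q ^ (j - l))
      = (1 - q ^ j) / (1 - q) := by
    intro j
    have h1 : (∑ l ∈ Finset.Icc 1 j, q ^ (j - l)) = ∑ t ∈ Finset.range j, q ^ t := by
      refine Finset.sum_nbij' (fun l => j - l) (fun t => j - t) ?_ ?_ ?_ ?_
        (fun a _ => rfl) <;>
        · intro k hk
          simp only [Finset.mem_Icc, Finset.mem_range] at *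
          omega
    rw [h1, geom_sum_eq (ne_of_lt hq1) j]
    rw [div_eq_div_iff (by linarith) (by linarith)]
    ring
  set G := ∑ j ∈ Finset.Icc 1 n, q ^ j with hGdef
  have hG0 : 0 ≤ G := Finset.sum_nonneg (fun j _ => pow_nonneg hq0 j)
  have hGle : G ≤ 1 / (1 - q) := by
    have hsub : Finset.Icc 1 n ⊆ Finset.range (n + 1) := by
      intro x hx
      simp only [Finset.mem_Icc, Finset.mem_range] at *
      omega
    have h2 : G ≤ ∑ j ∈ Finset.range (n + 1), q ^ j :=
      Finset.sum_le_sum_of_subset_of_nonneg hsub (fun j _ _ => pow_nonneg hq0 j)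
    have h3 : (∑ j ∈ Finset.range (n + 1), q ^ j) = (1 - q ^ (n + 1)) / (1 - q) := by
      rw [geom_sum_eq (ne_of_lt hq1), div_eq_div_iff (by linarith) (by linarith)]
      ring
    have h4 : (1 - q ^ (n + 1)) / (1 - q) ≤ 1 / (1 - q) := by
      gcongr
      nlinarith [pow_nonneg hq0 (n + 1)]
    linarith
  have hSval : (∑ j ∈ Finset.Icc 1 n, c * A * ∑ l ∈ Finset.Icc 1 j, q ^ (j - l))
      = c * A / (1 - q) * ((n : ℝ) - G) := by
    have h1 : ∀ j ∈ Finset.Icc 1 n,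
        c * A * ∑ l ∈ Finset.Icc 1 j, q ^ (j - l)
          = c * A / (1 - q) * (1 - q ^ j) := by
      intro j _
      rw [hgeom j]
      ring
    rw [Finset.sum_congr rfl h1, ← Finset.mul_sum, Finset.sum_sub_distrib,
      Finset.sum_const, Nat.card_Icc, Nat.add_sub_cancel, nsmul_eq_mul, mul_one]
  rw [hsum, hSval]
  have hdiff : (1 / (n:ℝ)) * (c * A / (1 - q) * ((n : ℝ) - G)) - c * (A / (1 - q))
      = -(c * (A * G)) / ((1 - q) * (n:ℝ)) := by
    field_simp
    ring
  rw [hdiff, abs_div, abs_neg, abs_mul]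
  rw [abs_of_nonneg (mul_nonneg hA0 hG0),
    abs_of_nonneg (le_of_lt (mul_pos h1q hnpos))]
  have hAG : A * G ≤ 1 := by
    calc A * G ≤ (1 - q) * G := mul_le_mul_of_nonneg_right hA1 hG0
      _ ≤ (1 - q) * (1 / (1 - q)) := mul_le_mul_of_nonneg_left hGle h1q.le
      _ = 1 := by field_simp
  calc |c| * (A * G) / ((1 - q) * (n:ℝ)) ≤ |c| * 1 / ((1 - q) * (n:ℝ)) := by
        gcongr
      _ = |c| / ((n:ℝ) * (1 - q)) := by rw [mul_one, mul_comm (1 - q)]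
end

section
/- Let p_1, ..., p_d be in [0,1) and define the d x d symmetric matrix P by P_{ii} = 1 and P_{im} = (1-p_i)*(1-p_m)/(1 - p_i*p_m) for i != m. Then P is positive semidefinite. If moreover p_i > 0 for every i, then P is positive definite. -/
open scoped BigOperators
open Matrix

/-- The staleness attenuation matrix `P` with `P_{ii} = 1` and
`P_{im} = (1-p_i)(1-p_m)/(1-p_i p_m)` for `i ≠ m`, where `p_i ∈ [0,1)`, is positive
semidefinite; it is positive definite if every `p_i > 0`. -/
theorem staleness_attenuation_matrix_posSemidef
    (d : ℕ) (p : Fin d → ℝ) (hp : ∀ i, p i ∈ Set.Ico (0:ℝ) 1) :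
    (Matrix.of fun i m : Fin d =>
        if i = m then (1:ℝ) else (1 - p i) * (1 - p m) / (1 - p i * p m)).PosSemidef
    ∧ ((∀ i, 0 < p i) →
      (Matrix.of fun i m : Fin d =>
          if i = m then (1:ℝ) else (1 - p i) * (1 - p m) / (1 - p i * p m)).PosDef) := by
  set M := (Matrix.of fun i m : Fin d =>
      if i = m then (1:ℝ) else (1 - p i) * (1 - p m) / (1 - p i * p m)) with hMdef
  have hp0 : ∀ i, 0 ≤ p i := fun i => (hp i).1
  have hp1 : ∀ i, p i < 1 := fun i => (hp i).2
  have hpp0 : ∀ i m, 0 ≤ p i * p m := fun i m => mul_nonneg (hp0 i) (hp0 m)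
  have hpp1 : ∀ i m, p i * p m < 1 := by
    intro i m; nlinarith [hp0 i, hp0 m, hp1 i, hp1 m]
  have hherm : M.IsHermitian := by
    ext i m
    simp only [hMdef, Matrix.conjTranspose_apply, Matrix.of_apply, star_trivial]
    rcases eq_or_ne i m with h | h
    · subst h; simp
    · rw [if_neg (Ne.symm h), if_neg h]; ring
  have key : ∀ x : Fin d → ℝ,
      dotProduct x (M *ᵥ x)
        = (∑' k : ℕ, (∑ i, x i * (1 - p i) * p i ^ k) ^ 2)
          + ∑ i, x i ^ 2 * (2 * p i / (1 + p i)) := by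
    intro x
    have step1 : dotProduct x (M *ᵥ x) = ∑ i, ∑ m, x i * M i m * x m := by
      simp [dotProduct, Matrix.mulVec, Finset.mul_sum, mul_assoc]
    have hsummable : ∀ i m : Fin d,
        Summable (fun k : ℕ => (x i * (1 - p i) * p i ^ k) * (x m * (1 - p m) * p m ^ k)) := by
      intro i m
      have h0 : (fun k : ℕ => (x i * (1 - p i) * p i ^ k) * (x m * (1 - p m) * p m ^ k))
          = fun k : ℕ => (x i * (1 - p i) * (x m * (1 - p m))) * (p i * p m) ^ k := by
        funext k; rw [mul_pow]; ring
      rw [h0]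
      exact (summable_geometric_of_lt_one (hpp0 i m) (hpp1 i m)).mul_left _
    have hterm : ∀ i m : Fin d, x i * M i m * x m
        = (∑' k : ℕ, (x i * (1 - p i) * p i ^ k) * (x m * (1 - p m) * p m ^ k))
          + (if i = m then x i ^ 2 * (2 * p i / (1 + p i)) else 0) := by
      intro i m
      have htsum : (∑' k : ℕ, (x i * (1 - p i) * p i ^ k) * (x m * (1 - p m) * p m ^ k))
          = x i * x m * ((1 - p i) * (1 - p m) / (1 - p i * p m)) := by
        have h0 : ∀ k : ℕ, (x i * (1 - p i) * p i ^ k) * (x m * (1 - p m) * p m ^ k)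
            = (x i * x m * ((1 - p i) * (1 - p m))) * (p i * p m) ^ k := by
          intro k; rw [mul_pow]; ring
        rw [tsum_congr h0, tsum_mul_left, tsum_geometric_of_lt_one (hpp0 i m) (hpp1 i m)]
        rw [div_eq_mul_inv]; ring
      rw [htsum]
      rcases eq_or_ne i m with h | h
      · subst h
        have h1 : (1:ℝ) - p i * p i ≠ 0 := by nlinarith [hp0 i, hp1 i]
        have h2 : (1:ℝ) + p i ≠ 0 := by nlinarith [hp0 i]
        have h1' : (1:ℝ) - p i ^ 2 ≠ 0 := by nlinarith [hp0 i, hp1 i]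
        simp only [hMdef, Matrix.of_apply, if_pos rfl, ↓reduceIte]
        field_simp
        ring
      · simp only [hMdef, Matrix.of_apply, if_neg h]
        ring
    rw [step1]
    have hsplit : ∑ i, ∑ m, x i * M i m * x m
        = (∑ i, ∑ m, ∑' k : ℕ, (x i * (1 - p i) * p i ^ k) * (x m * (1 - p m) * p m ^ k))
          + ∑ i, ∑ m, (if i = m then x i ^ 2 * (2 * p i / (1 + p i)) else 0) := by
      rw [← Finset.sum_add_distrib]
      refine Finset.sum_congr rfl fun i _ => ?_
      rw [← Finset.sum_add_distrib]
      exact Finset.sum_congr rfl fun m _ => hterm i m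
    rw [hsplit]
    congr 1
    · -- swap sums with tsum
      have hinner : ∀ i : Fin d,
          (∑ m, ∑' k : ℕ, (x i * (1 - p i) * p i ^ k) * (x m * (1 - p m) * p m ^ k))
            = ∑' k : ℕ, ∑ m, (x i * (1 - p i) * p i ^ k) * (x m * (1 - p m) * p m ^ k) := by
        intro i
        exact (Summable.tsum_finsetSum (fun m _ => hsummable i m)).symm
      rw [Finset.sum_congr rfl fun i _ => hinner i]
      rw [← Summable.tsum_finsetSum (fun i _ => summable_sum (fun m _ => hsummable i m))]
      refine tsum_congr fun k => ?_
      rw [sq, Finset.sum_mul_sum]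
    · simp
  refine ⟨Matrix.posSemidef_iff_dotProduct_mulVec.mpr ⟨hherm, fun x => ?_⟩, fun hppos => Matrix.posDef_iff_dotProduct_mulVec.mpr ⟨hherm, fun x hx => ?_⟩⟩
  · rw [star_trivial, key x]
    have h1 : 0 ≤ ∑' k : ℕ, (∑ i, x i * (1 - p i) * p i ^ k) ^ 2 :=
      tsum_nonneg fun k => sq_nonneg _
    have h2 : 0 ≤ ∑ i, x i ^ 2 * (2 * p i / (1 + p i)) := by
      refine Finset.sum_nonneg fun i _ => ?_
      have h3 : 0 ≤ 2 * p i / (1 + p i) :=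
        div_nonneg (by linarith [hp0 i]) (by linarith [hp0 i])
      exact mul_nonneg (sq_nonneg _) h3
    linarith
  · rw [star_trivial, key x]
    have h1 : 0 ≤ ∑' k : ℕ, (∑ i, x i * (1 - p i) * p i ^ k) ^ 2 :=
      tsum_nonneg fun k => sq_nonneg _
    obtain ⟨j, hj⟩ := Function.ne_iff.mp hx
    have h2 : 0 < ∑ i, x i ^ 2 * (2 * p i / (1 + p i)) := by
      refine Finset.sum_pos' (fun i _ => ?_) ⟨j, Finset.mem_univ j, ?_⟩
      · have h3 : 0 ≤ 2 * p i / (1 + p i) :=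
          div_nonneg (by linarith [hp0 i]) (by linarith [hp0 i])
        exact mul_nonneg (sq_nonneg _) h3
      · have hxj : 0 < x j ^ 2 :=
          lt_of_le_of_ne (sq_nonneg _) (Ne.symm (pow_ne_zero 2 hj))
        have h4 : 0 < 2 * p j / (1 + p j) :=
          div_pos (by linarith [hppos j]) (by linarith [hp0 j])
        exact mul_pos hxj h4
    linarith
end

section
/- Let 0 < q < 1, let m_d > 0 and phi > 0, and let S and S_hat be d x d real matrices satisfying max_{1<=i<=d} Sum_{m=1}^{d} |S_{im}|^q <= m_d and max_{i,m} |S_hat_{im} - S_{im}| <= phi. Define the hard-thresholded matrix S_hat^T by S_hat^T_{im} = S_hat_{im} if |S_hat_{im}| >= 2*phi and S_hat^T_{im} = 0 otherwise. Then the maximum row l1 error satisfies max_{1<=i<=d} Sum_{m=1}^{d} |S_hat^T_{im} - S_{im}| <= (1 + 3^{1-q}) * m_d * phi^{1-q}. In particular, if S and S_hat are symmetric, the spectral norm of S_hat^T - S is bounded by (1 + 3^{1-q}) * m_d * phi^{1-q}. -/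
/-!
Each entry of the thresholded error is controlled by `|S_im|^q`: a kept entry has error at most
`φ` while `|S_im| ≥ φ`, so `φ = φ^{1-q} φ^q ≤ φ^{1-q} |S_im|^q`; a dropped entry has error
`|S_im| ≤ 3φ`, so `|S_im| = |S_im|^{1-q} |S_im|^q ≤ (3φ)^{1-q} |S_im|^q`. Summing along a row
gives the `ℓ¹` bound. For a symmetric error matrix the column sums equal the row sums, and the
Schur test (Cauchy–Schwarz weighted by `|A_ij|`) bounds the spectral norm by the same quantity.
-/

open Matrix

noncomputable def hardThreshold (t x : ℝ) : ℝ := if t ≤ |x| then x else 0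

theorem Real.rpow_one_sub_mul_rpow_self {x : ℝ} (hx : 0 ≤ x) (q : ℝ) :
    x ^ (1 - q) * x ^ q = x := by
  rw [← Real.rpow_add' hx (by norm_num), sub_add_cancel, Real.rpow_one]

theorem abs_hardThreshold_sub_le {q φ s ŝ : ℝ} (hq0 : 0 ≤ q) (hq1 : q ≤ 1)
    (herr : |ŝ - s| ≤ φ) :
    |hardThreshold (2 * φ) ŝ - s| ≤ (1 + 3 ^ (1 - q)) * φ ^ (1 - q) * |s| ^ q := by
  have hφ : 0 ≤ φ := (abs_nonneg _).trans herr
  have h3 : (0 : ℝ) ≤ 3 ^ (1 - q) := by positivity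
  have hterm : 0 ≤ φ ^ (1 - q) * |s| ^ q := by positivity
  unfold hardThreshold
  split_ifs with hkeep
  · have hkept : φ ≤ |s| := by linarith [abs_sub_abs_le_abs_sub ŝ s]
    calc |ŝ - s| ≤ φ ^ (1 - q) * φ ^ q := (Real.rpow_one_sub_mul_rpow_self hφ q).symm ▸ herr
      _ ≤ φ ^ (1 - q) * |s| ^ q := by gcongr
      _ ≤ (1 + 3 ^ (1 - q)) * φ ^ (1 - q) * |s| ^ q := by nlinarith
  · have hdropped : |s| ≤ 3 * φ := by linarith [abs_sub_abs_le_abs_sub s ŝ, abs_sub_comm s ŝ]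
    calc |0 - s| = |s| ^ (1 - q) * |s| ^ q := by
          rw [zero_sub, abs_neg, Real.rpow_one_sub_mul_rpow_self (abs_nonneg s)]
      _ ≤ (3 * φ) ^ (1 - q) * |s| ^ q := by gcongr
      _ = 3 ^ (1 - q) * φ ^ (1 - q) * |s| ^ q := by rw [Real.mul_rpow (by norm_num) hφ]
      _ ≤ (1 + 3 ^ (1 - q)) * φ ^ (1 - q) * |s| ^ q := by nlinarith

theorem sum_abs_hardThreshold_sub_le {ι : Type*} [Fintype ι] {q md φ : ℝ} {s ŝ : ι → ℝ}
    (hq0 : 0 ≤ q) (hq1 : q ≤ 1) (hφ : 0 ≤ φ) (hsparse : ∑ m, |s m| ^ q ≤ md)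
    (herr : ∀ m, |ŝ m - s m| ≤ φ) :
    ∑ m, |hardThreshold (2 * φ) (ŝ m) - s m| ≤ (1 + 3 ^ (1 - q)) * md * φ ^ (1 - q) :=
  calc ∑ m, |hardThreshold (2 * φ) (ŝ m) - s m|
      ≤ ∑ m, (1 + 3 ^ (1 - q)) * φ ^ (1 - q) * |s m| ^ q :=
        Finset.sum_le_sum fun m _ => abs_hardThreshold_sub_le hq0 hq1 (herr m)
    _ = (1 + 3 ^ (1 - q)) * φ ^ (1 - q) * ∑ m, |s m| ^ q := by rw [Finset.mul_sum]
    _ ≤ (1 + 3 ^ (1 - q)) * φ ^ (1 - q) * md := by gcongr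
    _ = (1 + 3 ^ (1 - q)) * md * φ ^ (1 - q) := by ring

namespace Matrix

variable {m n 𝕜 : Type*} [Fintype n] [RCLike 𝕜]

theorem sq_norm_mulVec_apply_le (A : Matrix m n 𝕜) (x : n → 𝕜) (i : m) :
    ‖(A *ᵥ x) i‖ ^ 2 ≤ (∑ j, ‖A i j‖) * ∑ j, ‖A i j‖ * ‖x j‖ ^ 2 :=
  calc ‖(A *ᵥ x) i‖ ^ 2 ≤ (∑ j, ‖A i j‖ * ‖x j‖) ^ 2 := by
        gcongr
        simpa only [mulVec, dotProduct, norm_mul] using norm_sum_le _ fun j => A i j * x j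
    _ ≤ (∑ j, ‖A i j‖) * ∑ j, ‖A i j‖ * ‖x j‖ ^ 2 :=
        Finset.sum_sq_le_sum_mul_sum_of_sq_le_mul _ (fun _ _ => by positivity)
          (fun _ _ => by positivity) fun _ _ => (by ring : _ = _).le

theorem norm_toEuclideanCLM_le_sqrt_mul [DecidableEq n] (A : Matrix n n 𝕜) {R C : ℝ}
    (hR : 0 ≤ R) (hrow : ∀ i, ∑ j, ‖A i j‖ ≤ R) (hcol : ∀ j, ∑ i, ‖A i j‖ ≤ C) :
    ‖toEuclideanCLM (𝕜 := 𝕜) A‖ ≤ √(R * C) := by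
  refine ContinuousLinearMap.opNorm_le_bound _ (Real.sqrt_nonneg _) fun x => ?_
  have hsq : ‖toEuclideanCLM (𝕜 := 𝕜) A x‖ ^ 2 ≤ R * C * ‖x‖ ^ 2 :=
    calc ‖toEuclideanCLM (𝕜 := 𝕜) A x‖ ^ 2 = ∑ i, ‖(A *ᵥ x.ofLp) i‖ ^ 2 :=
          EuclideanSpace.norm_sq_eq _
      _ ≤ ∑ i, R * ∑ j, ‖A i j‖ * ‖x j‖ ^ 2 := by
          gcongr with i
          exact (sq_norm_mulVec_apply_le A _ i).trans (by gcongr; exact hrow i)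
      _ = R * ∑ j, (∑ i, ‖A i j‖) * ‖x j‖ ^ 2 := by
          simp only [← Finset.mul_sum, Finset.sum_mul]
          rw [Finset.sum_comm]
      _ ≤ R * ∑ j, C * ‖x j‖ ^ 2 := by gcongr with j; exact hcol j
      _ = R * C * ‖x‖ ^ 2 := by rw [← Finset.mul_sum, EuclideanSpace.norm_sq_eq, mul_assoc]
  rw [← Real.sqrt_sq (norm_nonneg (toEuclideanCLM (𝕜 := 𝕜) A x)),
    ← Real.sqrt_sq (norm_nonneg x), ← Real.sqrt_mul' _ (sq_nonneg _)]
  exact Real.sqrt_le_sqrt hsq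

end Matrix

/-- Deterministic hard-thresholding bound for approximately sparse matrices: if each row of
`S` has `l^q`-norm at most `m_d` and the entrywise error of `Ŝ` is at most `φ`, then the
matrix obtained by keeping only entries of `Ŝ` of magnitude at least `2φ` has maximum row
`l¹` error at most `(1 + 3^{1-q}) m_d φ^{1-q}`; for symmetric `S, Ŝ` the spectral (l²
operator) norm of the error obeys the same bound. -/
theorem hard_thresholding_sparse_bound
    (d : ℕ) (q md φ : ℝ) (hq0 : 0 < q) (hq1 : q < 1) (hmd : 0 < md) (hφ : 0 < φ)
    (S Shat : Matrix (Fin d) (Fin d) ℝ)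
    (hsparse : ∀ i, ∑ m, |S i m| ^ q ≤ md)
    (herr : ∀ i m, |Shat i m - S i m| ≤ φ) :
    (∀ i, ∑ m,
        |(Matrix.of fun i m : Fin d =>
            if 2 * φ ≤ |Shat i m| then Shat i m else 0) i m - S i m|
      ≤ (1 + 3 ^ (1 - q)) * md * φ ^ (1 - q))
    ∧ (Sᵀ = S → Shatᵀ = Shat →
      ‖Matrix.toEuclideanCLM (𝕜 := ℝ)
          ((Matrix.of fun i m : Fin d =>
            if 2 * φ ≤ |Shat i m| then Shat i m else 0) - S)‖
        ≤ (1 + 3 ^ (1 - q)) * md * φ ^ (1 - q)) := by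
  set R := (1 + 3 ^ (1 - q)) * md * φ ^ (1 - q)
  have hT : (Matrix.of fun i m : Fin d => if 2 * φ ≤ |Shat i m| then Shat i m else 0) =
      Shat.map (hardThreshold (2 * φ)) := rfl
  rw [hT]
  have hrow (i : Fin d) : ∑ m, |Shat.map (hardThreshold (2 * φ)) i m - S i m| ≤ R :=
    sum_abs_hardThreshold_sub_le hq0.le hq1.le hφ.le (hsparse i) (herr i)
  refine ⟨hrow, fun hS hShat => ?_⟩
  set A := Shat.map (hardThreshold (2 * φ)) - S with hAdef
  have hA : Aᵀ = A := by rw [hAdef, transpose_sub, ← transpose_map, hS, hShat]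
  have hrowA (i : Fin d) : ∑ m, ‖A i m‖ ≤ R := by simp only [Real.norm_eq_abs]; exact hrow i
  have hR : 0 ≤ R := by positivity
  calc ‖toEuclideanCLM (𝕜 := ℝ) A‖ ≤ √(R * R) :=
        norm_toEuclideanCLM_le_sqrt_mul A hR hrowA fun m => by rw [← hA]; exact hrowA m
    _ = R := Real.sqrt_mul_self hR
end
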